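/- arXiv:2101.08503 — 6 statements merged into one kernel-verified Lean document; each statement's English description precedes it below -/
import Mathlib

section
/- Let Q = x^d + a_{d−1}x^{d−1} + ⋯ + a_1x + a_0 be a monic real polynomial of degree d with all coefficients a_0,…,a_{d−1} nonzero and with d real roots counted with multiplicity (a hyperbolic polynomial). Then the number of sign changes in the sequence of coefficients (a_0, a_1, …, a_{d−1}, 1) equals the number of positive roots of Q counted with multiplicity, and the number of sign preservations in this sequence equals the number of negative roots of Q counted with multiplicity. -/
open Polynomial

/-- The monic polynomial `x^d + a_{d-1} x^{d-1} + ⋯ + a_1 x + a_0`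
associated to a coefficient vector `a ∈ ℝ^d`. -/
noncomputable def Qpoly (d : ℕ) (a : Fin d → ℝ) : Polynomial ℝ :=
  X ^ d + ∑ j : Fin d, C (a j) * X ^ (j : ℕ)

/-- A strictly decreasing list of indices at which the values of `g` are nonzero and
alternate in sign. -/
def Alt (g : ℕ → ℝ) (l : List ℕ) : Prop :=
  l.Chain' (fun i j => j < i ∧ g i * g j < 0) ∧ ∀ i ∈ l, g i ≠ 0

lemma sgn_trans {x a b : ℝ} (h1 : 0 < x * a) (h2 : 0 < x * b) : 0 < a * b := by
  have hx2 : (0:ℝ) < x ^ 2 := by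
    have hx : x ≠ 0 := by rintro rfl; simp at h1
    positivity
  nlinarith [mul_pos h1 h2]

lemma sgn_mix {u v x y : ℝ} (h1 : 0 < u * x) (h2 : 0 < v * y) (h3 : x * y < 0) :
    u * v < 0 := by
  by_contra h
  push_neg at h
  nlinarith [mul_pos h1 h2]

lemma coeff_X_add_C_mul (s : ℝ) (P : ℝ[X]) (i : ℕ) :
    ((X + C s) * P).coeff i = (if i = 0 then 0 else P.coeff (i - 1)) + s * P.coeff i := by
  rw [add_mul, coeff_add, coeff_C_mul]
  cases i with
  | zero => simp
  | succ n => simp [coeff_X_mul]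

/-- Transfer an alternating sequence through multiplication by `X + C s`, `s ≥ 0`. -/
lemma step_le (s : ℝ) (hs : 0 ≤ s) (P : ℝ[X]) (l : List ℕ)
    (h : Alt ((X + C s) * P).coeff l) :
    ∃ l', Alt P.coeff l' ∧ l'.length = l.length := by
  set Qc : ℕ → ℝ := ((X + C s) * P).coeff with hQc
  set Pc : ℕ → ℝ := P.coeff with hPc
  set ch : ℕ → ℕ := fun i => if 0 < Pc i * Qc i then i else i - 1 with hch
  have key : ∀ i, Qc i ≠ 0 → 0 < Pc (ch i) * Qc i := by
    intro i hi
    by_cases hcond : 0 < Pc i * Qc i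
    · simpa [hch, hcond] using hcond
    · have hrel : Qc i = (if i = 0 then 0 else Pc (i - 1)) + s * Pc i :=
        coeff_X_add_C_mul s P i
      simp only [hch, hcond, if_false]
      cases i with
      | zero =>
        exfalso
        simp only [if_true, eq_self_iff_true, zero_add] at hrel
        apply hcond
        rw [hrel] at hi ⊢
        have hs' : 0 < s := by
          rcases hs.lt_or_eq with h | h
          · exact h
          · exact absurd (by rw [← h, zero_mul]) hi
        have hp : Pc 0 ≠ 0 := by
          intro h0
          exact hi (by rw [h0, mul_zero])
        have : 0 < Pc 0 ^ 2 := by positivity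
        nlinarith
      | succ n =>
        simp only [Nat.succ_ne_zero, if_false] at hrel
        rcases hi.lt_or_gt with hq | hq
        · nlinarith
        · nlinarith
  have hle : ∀ i, ch i ≤ i ∧ i ≤ ch i + 1 := by
    intro i
    simp only [hch]
    split <;> omega
  refine ⟨l.map ch, ⟨?_, ?_⟩, l.length_map ch⟩
  · rw [List.Chain', List.isChain_map]
    refine h.1.imp ?_
    rintro i j ⟨hij, hsgn⟩
    have hqi : Qc i ≠ 0 := fun h0 => by simp [h0] at hsgn
    have hqj : Qc j ≠ 0 := fun h0 => by simp [h0] at hsgn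
    have ki := key i hqi
    have kj := key j hqj
    constructor
    · have h1 := hle i
      have h2 := hle j
      rcases eq_or_lt_of_le (show ch j ≤ ch i by omega) with heq | hlt
      · exfalso
        have : ch j = j := by omega
        have hji : ch i = j := by omega
        rw [hji] at ki
        rw [this] at kj
        have := sgn_trans kj ki
        nlinarith
      · omega
    · exact sgn_mix ki kj (by nlinarith)
  · intro j hj
    rcases List.mem_map.mp hj with ⟨i, hi, rfl⟩
    have := key i (h.2 i hi)
    intro h0
    rw [h0] at this
    simp at this

/-- An alternating sequence of a nonzero polynomial has length at most `natDegree + 1`. -/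
lemma alt_length (P : ℝ[X]) (l : List ℕ) (h : Alt P.coeff l) :
    l.length ≤ P.natDegree + 1 := by
  have hchain : l.Chain' (· > ·) := h.1.imp fun _ _ h => h.1
  have hpw : l.Pairwise (· > ·) := List.isChain_iff_pairwise.mp hchain
  have hnd : l.Nodup := hpw.imp fun h => ne_of_gt h
  have hsub : l.toFinset ⊆ Finset.range (P.natDegree + 1) := by
    intro i hi
    rw [List.mem_toFinset] at hi
    rw [Finset.mem_range, Nat.lt_succ_iff]
    exact le_natDegree_of_ne_zero (h.2 i hi)
  calc l.length = l.toFinset.card := (List.toFinset_card_of_nodup hnd).symm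
    _ ≤ (Finset.range (P.natDegree + 1)).card := Finset.card_le_card hsub
    _ = P.natDegree + 1 := Finset.card_range _

/-- From a nowhere-zero coefficient sequence, build an alternating sequence whose length
is the number of sign changes plus one. -/
lemma exists_alt (c : ℕ → ℝ) : ∀ d : ℕ, (∀ i ≤ d, c i ≠ 0) →
    ∃ l : List ℕ, Alt c l ∧ l.head? = some d ∧ (∀ i ∈ l, i ≤ d) ∧
      l.length = ((Finset.range d).filter (fun i => c i * c (i + 1) < 0)).card + 1 := by
  intro d
  induction d with
  | zero =>
    intro hc
    exact ⟨[0], ⟨List.isChain_singleton _, by simpa using hc 0 le_rfl⟩, rfl, by simp, by simp⟩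
  | succ d ih =>
    intro hc
    obtain ⟨l, ⟨hch, hnz⟩, hhd, hmem, hlen⟩ := ih (fun i hi => hc i (hi.trans d.le_succ))
    have hcard : ((Finset.range (d + 1)).filter (fun i => c i * c (i + 1) < 0)).card =
        ((Finset.range d).filter (fun i => c i * c (i + 1) < 0)).card +
          (if c d * c (d + 1) < 0 then 1 else 0) := by
      rw [Finset.range_add_one, Finset.filter_insert]
      split_ifs with h
      · rw [Finset.card_insert_of_notMem (by simp)]
      · simp
    by_cases hsgn : c d * c (d + 1) < 0
    · refine ⟨(d + 1) :: l, ⟨?_, ?_⟩, rfl, ?_, ?_⟩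
      · refine List.isChain_cons.mpr ⟨?_, hch⟩
        intro y hy
        rw [hhd] at hy
        cases hy
        exact ⟨d.lt_succ_self, by nlinarith⟩
      · intro i hi
        rcases List.mem_cons.mp hi with rfl | hi
        · exact hc _ le_rfl
        · exact hnz _ hi
      · intro i hi
        rcases List.mem_cons.mp hi with rfl | hi
        · exact le_rfl
        · exact (hmem _ hi).trans d.le_succ
      · simp [hlen, hcard, hsgn]
    · have hpos : 0 < c d * c (d + 1) := by
        rcases (mul_ne_zero (hc d d.le_succ) (hc (d + 1) le_rfl)).lt_or_gt with h | h
        · exact absurd h hsgn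
        · exact h
      obtain ⟨t, rfl⟩ : ∃ t, l = d :: t := by
        cases l with
        | nil => simp at hhd
        | cons a t =>
          simp only [List.head?_cons, Option.some.injEq] at hhd
          exact ⟨t, by rw [hhd]⟩
      refine ⟨(d + 1) :: t, ⟨?_, ?_⟩, rfl, ?_, ?_⟩
      · refine List.isChain_cons.mpr ⟨?_, (List.isChain_cons.mp hch).2⟩
        intro y hy
        have hrel := (List.isChain_cons.mp hch).1 y hy
        refine ⟨hrel.1.trans d.lt_succ_self, ?_⟩
        have h1 : 0 < c d * (-(c y)) := by rw [mul_neg]; linarith [hrel.2]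
        have h2 := sgn_trans hpos h1
        rw [mul_neg] at h2
        linarith
      · intro i hi
        rcases List.mem_cons.mp hi with rfl | hi
        · exact hc _ le_rfl
        · exact hnz _ (List.mem_cons_of_mem _ hi)
      · intro i hi
        rcases List.mem_cons.mp hi with rfl | hi
        · exact le_rfl
        · exact (hmem _ (List.mem_cons_of_mem _ hi)).trans d.le_succ
      · simpa [hcard, hsgn] using hlen

lemma alt_congr (g h : ℕ → ℝ) (l : List ℕ) (hg : Alt g l) (he : ∀ i ∈ l, g i = h i) :
    Alt h l := by
  refine ⟨?_, fun i hi => (he i hi) ▸ hg.2 i hi⟩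
  have hc := hg.1
  rw [List.Chain', List.isChain_iff_getElem] at hc ⊢
  intro i hi
  have := hc i hi
  rw [← he _ (l.getElem_mem _), ← he _ (l.getElem_mem _)]
  exact this

lemma coeff_X_sub_C_mul (t : ℝ) (P : ℝ[X]) (i : ℕ) :
    ((X - C t) * P).coeff i = (if i = 0 then 0 else P.coeff (i - 1)) - t * P.coeff i := by
  have hX : X - C t = X + C (-t) := by rw [map_neg, ← sub_eq_add_neg]
  rw [hX, coeff_X_add_C_mul]
  ring

lemma coeff_neg_prod (m : Multiset ℝ) : ∀ i : ℕ,
    ((m.map (fun t => X - C (-t))).prod).coeff i =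
      (-1) ^ (Multiset.card m + i) * ((m.map (fun t => X - C t)).prod).coeff i := by
  induction m using Multiset.induction with
  | empty => intro i; rcases i with _ | n <;> simp [coeff_one]
  | cons t m ih =>
    intro i
    rw [Multiset.map_cons, Multiset.prod_cons, Multiset.map_cons, Multiset.prod_cons,
      Multiset.card_cons]
    have hX : X - C (-t) = X + C t := by rw [map_neg, sub_neg_eq_add]
    rcases i with _ | n
    · rw [hX, coeff_X_add_C_mul, coeff_X_sub_C_mul, ih 0]
      simp [pow_succ, pow_add]
      ring
    · rw [hX, coeff_X_add_C_mul, coeff_X_sub_C_mul, ih (n + 1)]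
      simp only [Nat.succ_ne_zero, if_false, Nat.add_sub_cancel]
      rw [ih n]
      simp [pow_succ, pow_add]
      ring

lemma prod_le (B : Multiset ℝ) : (∀ x ∈ B, x ≤ 0) → ∀ (A : ℝ[X]) (l : List ℕ),
    Alt ((B.map (fun t => X - C t)).prod * A).coeff l → l.length ≤ A.natDegree + 1 := by
  induction B using Multiset.induction with
  | empty =>
    intro _ A l h
    rw [Multiset.map_zero, Multiset.prod_zero, one_mul] at h
    exact alt_length A l h
  | cons t B ih =>
    intro hB A l h
    rw [Multiset.map_cons, Multiset.prod_cons, mul_assoc] at h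
    have hX : X - C t = X + C (-t) := by rw [map_neg, ← sub_eq_add_neg]
    rw [hX] at h
    obtain ⟨l', hl', hlen⟩ := step_le (-t)
      (by have := hB t (Multiset.mem_cons_self t B); linarith) _ l h
    rw [← hlen]
    exact ih (fun x hx => hB x (Multiset.mem_cons_of_mem hx)) A l' hl'

lemma changes_le (d : ℕ) (m : Multiset ℝ) (c : ℕ → ℝ) (hc : ∀ i ≤ d, c i ≠ 0)
    (hcoeff : ∀ i ≤ d, c i = ((m.map (fun t => X - C t)).prod).coeff i) :
    ((Finset.range d).filter (fun i => c i * c (i + 1) < 0)).card ≤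
      Multiset.card (m.filter (fun x => 0 < x)) := by
  obtain ⟨l, hAlt, hhd, hmem, hlen⟩ := exists_alt c d hc
  have hAlt' : Alt ((m.map (fun t => X - C t)).prod).coeff l :=
    alt_congr _ _ l hAlt (fun i hi => hcoeff i (hmem i hi))
  have hsplit : m.filter (fun x => ¬ 0 < x) + m.filter (fun x => 0 < x) = m := by
    rw [add_comm]; exact Multiset.filter_add_not _ _
  have hprod : (m.map (fun t => X - C t)).prod =
      ((m.filter (fun x => ¬ 0 < x)).map (fun t => X - C t)).prod *
        ((m.filter (fun x => 0 < x)).map (fun t => X - C t)).prod := by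
    rw [← Multiset.prod_add, ← Multiset.map_add, hsplit]
  rw [hprod] at hAlt'
  have hle := prod_le (m.filter (fun x => ¬ 0 < x))
    (fun x hx => le_of_not_gt (Multiset.mem_filter.mp hx).2) _ l hAlt'
  rw [natDegree_multiset_prod_X_sub_C_eq_card] at hle
  omega

lemma map_neg_comm (m : Multiset ℝ) :
    (m.map (fun x => -x)).map (fun t => X - C t) = m.map (fun t => X - C (-t)) := by
  rw [Multiset.map_map]
  rfl

theorem stmt6 (d : ℕ) (hd : 0 < d) (a : Fin d → ℝ) (ha : ∀ j, a j ≠ 0)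
    -- `Qpoly d a` is hyperbolic: it has `d` real roots counted with multiplicity
    (r : Fin d → ℝ) (hQ : Qpoly d a = ∏ i : Fin d, (X - C (r i))) :
    -- the sequence of coefficients `(a_0, a_1, …, a_{d-1}, 1)`
    let c : ℕ → ℝ := fun i => if h : i < d then a ⟨i, h⟩ else 1
    -- sign changes = number of positive roots counted with multiplicity
    ((Finset.range d).filter (fun i => c i * c (i + 1) < 0)).card =
      Multiset.card ((Qpoly d a).roots.filter (fun x => 0 < x)) ∧
    -- sign preservations = number of negative roots counted with multiplicity
    ((Finset.range d).filter (fun i => 0 < c i * c (i + 1))).card =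
      Multiset.card ((Qpoly d a).roots.filter (fun x => x < 0)) := by
  intro c
  have hcdef : ∀ i, c i = if h : i < d then a ⟨i, h⟩ else 1 := fun i => rfl
  set m : Multiset ℝ := Finset.univ.val.map r with hm
  have hcm : Multiset.card m = d := by simp [hm]
  have hQm : Qpoly d a = (m.map (fun t => X - C t)).prod := by
    rw [hQ, Finset.prod_eq_multiset_prod, hm, Multiset.map_map]
    rfl
  have hcoeff : ∀ i ≤ d, c i = (Qpoly d a).coeff i := by
    intro i hi
    unfold Qpoly
    rw [coeff_add, coeff_X_pow, finset_sum_coeff]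
    simp only [coeff_C_mul, coeff_X_pow]
    rcases lt_or_eq_of_le hi with hlt | heq
    · have hsum : (∑ j : Fin d, a j * if i = (j : ℕ) then (1:ℝ) else 0) = a ⟨i, hlt⟩ := by
        rw [Finset.sum_eq_single (⟨i, hlt⟩ : Fin d)]
        · simp
        · intro j _ hj
          rw [if_neg fun hij => hj (Fin.ext hij.symm), mul_zero]
        · intro h
          exact absurd (Finset.mem_univ _) h
      rw [hsum, if_neg (Nat.ne_of_lt hlt), zero_add, hcdef, dif_pos hlt]
    · have hsum : (∑ j : Fin d, a j * if i = (j : ℕ) then (1:ℝ) else 0) = 0 := by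
        apply Finset.sum_eq_zero
        intro j _
        rw [if_neg (by have := j.isLt; omega), mul_zero]
      rw [hsum, if_pos heq, add_zero, hcdef, dif_neg (by omega)]
  have hcne : ∀ i ≤ d, c i ≠ 0 := by
    intro i hi
    rw [hcdef]
    split
    · exact ha _
    · exact one_ne_zero
  have hco : ∀ i ≤ d, c i = ((m.map (fun t => X - C t)).prod).coeff i := by
    intro i hi
    rw [hcoeff i hi, hQm]
  have hroots : (Qpoly d a).roots = m := by rw [hQm, roots_multiset_prod_X_sub_C]
  have hnz : ∀ x ∈ m, x ≠ 0 := by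
    rintro x hx rfl
    have h0 : (Qpoly d a).coeff 0 ≠ 0 := by
      rw [← hcoeff 0 (Nat.zero_le d)]
      exact hcne 0 (Nat.zero_le d)
    apply h0
    rw [coeff_zero_eq_eval_zero, hQm, eval_multiset_prod]
    apply Multiset.prod_eq_zero
    rw [Multiset.map_map]
    exact Multiset.mem_map.mpr ⟨0, hx, by simp⟩
  set p := Multiset.card (m.filter (fun x => 0 < x)) with hp
  set n := Multiset.card (m.filter (fun x => x < 0)) with hn
  have hfilterneg : m.filter (fun x => ¬ 0 < x) = m.filter (fun x => x < 0) := by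
    apply Multiset.filter_congr
    intro x hx
    constructor
    · intro h
      exact (le_of_not_gt h).lt_of_ne (hnz x hx)
    · intro h
      exact not_lt.mpr h.le
  have hpn : p + n = d := by
    have h1 := congrArg Multiset.card (Multiset.filter_add_not (fun x => 0 < x) m)
    rw [Multiset.card_add, hfilterneg, hcm] at h1
    omega
  have hch : ((Finset.range d).filter (fun i => c i * c (i + 1) < 0)).card ≤ p :=
    changes_le d m c hcne hco
  set c' : ℕ → ℝ := fun i => (-1) ^ (d + i) * c i with hc'
  have hc'ne : ∀ i ≤ d, c' i ≠ 0 := fun i hi =>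
    mul_ne_zero (pow_ne_zero _ (by norm_num)) (hcne i hi)
  set m' : Multiset ℝ := m.map (fun x => -x) with hm'
  have hco' : ∀ i ≤ d, c' i = ((m'.map (fun t => X - C t)).prod).coeff i := by
    intro i hi
    rw [hm', map_neg_comm m, coeff_neg_prod m i, hcm, ← hco i hi]
  have hflip : ∀ i, c' i * c' (i + 1) = -(c i * c (i + 1)) := by
    intro i
    have hpow : (-1:ℝ) ^ (d + i) * (-1) ^ (d + (i + 1)) = -1 := by
      rw [← pow_add]
      have h2 : d + i + (d + (i + 1)) = 2 * (d + i) + 1 := by ring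
      rw [h2, pow_succ, pow_mul]
      norm_num
    calc c' i * c' (i + 1)
        = ((-1:ℝ) ^ (d + i) * (-1) ^ (d + (i + 1))) * (c i * c (i + 1)) := by
          simp only [hc']; ring
      _ = -(c i * c (i + 1)) := by rw [hpow]; ring
  have hpresset : (Finset.range d).filter (fun i => 0 < c i * c (i + 1)) =
      (Finset.range d).filter (fun i => c' i * c' (i + 1) < 0) := by
    apply Finset.filter_congr
    intro i _
    rw [hflip i]
    exact neg_lt_zero.symm
  have hm'filter : Multiset.card (m'.filter (fun x => 0 < x)) = n := by
    rw [hm', Multiset.filter_map, Multiset.card_map, hn]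
    congr 1
    apply Multiset.filter_congr
    intro x _
    exact neg_pos
  have hpres : ((Finset.range d).filter (fun i => 0 < c i * c (i + 1))).card ≤ n := by
    rw [hpresset, ← hm'filter]
    exact changes_le d m' c' hc'ne hco'
  have hpart : ((Finset.range d).filter (fun i => c i * c (i + 1) < 0)).card +
      ((Finset.range d).filter (fun i => 0 < c i * c (i + 1))).card = d := by
    have h1 := Finset.card_filter_add_card_filter_not
      (s := Finset.range d) (p := fun i => c i * c (i + 1) < 0)
    rw [Finset.card_range] at h1
    have h2 : (Finset.range d).filter (fun i => ¬ c i * c (i + 1) < 0) =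
        (Finset.range d).filter (fun i => 0 < c i * c (i + 1)) := by
      apply Finset.filter_congr
      intro i hi
      rw [Finset.mem_range] at hi
      have hne : c i * c (i + 1) ≠ 0 :=
        mul_ne_zero (hcne i hi.le) (hcne (i + 1) hi)
      constructor
      · intro h
        exact hne.lt_or_gt.resolve_left h
      · intro h
        exact not_lt.mpr h.le
    rw [h2] at h1
    exact h1
  rw [hroots, ← hp, ← hn]
  constructor <;> omega
end

section
/- Let Q be a monic real polynomial of degree d with d distinct real roots, all nonzero. Then for every t ≥ 0 the polynomial Y := (Q + t·x·Q′)/(1 + t·d) is a monic polynomial of degree d with d distinct real roots, all nonzero; moreover, writing Q = x^d + Σ_{j<d} a_j x^j, the coefficient of x^j in Y equals ((1+tj)/(1+td))·a_j, so that the signs of all coefficients of Y coincide with those of Q. -/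
open Polynomial

lemma sign_prod_aux {ι : Type*} [DecidableEq ι] (S : Finset ι) (f : ι → ℝ)
    [DecidablePred fun i => f i < 0]
    (h : ∀ i ∈ S, f i ≠ 0) :
    0 < (-1:ℝ) ^ (S.filter (fun i => f i < 0)).card * ∏ i ∈ S, f i := by
  classical
  induction S using Finset.induction_on with
  | empty => simp
  | @insert a s ha ih =>
    have hfa := h a (Finset.mem_insert_self a s)
    have ih' := ih (fun i hi => h i (Finset.mem_insert_of_mem hi))
    rw [Finset.filter_insert, Finset.prod_insert ha]
    by_cases hlt : f a < 0
    · rw [if_pos hlt, Finset.card_insert_of_notMem (by simp [ha]), pow_succ]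
      nlinarith
    · have hpos : 0 < f a := lt_of_le_of_ne (not_lt.1 hlt) (Ne.symm hfa)
      rw [if_neg hlt]
      nlinarith

lemma derivative_finset_prod {ι : Type*} [DecidableEq ι] (S : Finset ι) (f : ι → ℝ[X]) :
    derivative (∏ i ∈ S, f i) = ∑ i ∈ S, (∏ j ∈ S.erase i, f j) * derivative (f i) := by
  induction S using Finset.induction_on with
  | empty => simp
  | @insert a s ha ih =>
    rw [Finset.prod_insert ha, derivative_mul, ih, Finset.sum_insert ha,
      Finset.erase_insert ha, Finset.mul_sum]
    congr 1
    · rw [mul_comm]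
    · refine Finset.sum_congr rfl fun i hi => ?_
      rw [Finset.erase_insert_of_ne (by rintro rfl; exact ha hi),
        Finset.prod_insert (by simp [ha, Finset.mem_erase])]
      ring

theorem stmt7 (d : ℕ) (hd : 0 < d) (Q : Polynomial ℝ)
    (r : Fin d → ℝ) (hr : Function.Injective r) (hr0 : ∀ i, r i ≠ 0)
    (hQ : Q = ∏ i : Fin d, (X - C (r i)))
    (t : ℝ) (ht : 0 ≤ t) :
    let Y : Polynomial ℝ :=
      C (1 / (1 + t * d)) * (Q + C t * (X * Polynomial.derivative Q))
    -- `Y` is monic of degree `d` with `d` distinct real roots, all nonzero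
    (∃ s : Fin d → ℝ, Function.Injective s ∧ (∀ i, s i ≠ 0) ∧
      Y = ∏ i : Fin d, (X - C (s i))) ∧
    -- the coefficient of `x^j` in `Y` equals `((1 + t j)/(1 + t d)) ⬝ (coefficient of `x^j` in Q)`,
    -- so the signs of all coefficients of `Y` coincide with those of `Q`
    ∀ j : ℕ, Y.coeff j = ((1 + t * j) / (1 + t * d)) * Q.coeff j := by
  classical
  intro Y
  have htd : (0:ℝ) < 1 + t * d := by
    have : (0:ℝ) ≤ t * d := by positivity
    linarith
  -- coefficient formula
  have hderiv_coeff : ∀ j : ℕ, (C t * (X * derivative Q)).coeff j = t * j * Q.coeff j := by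
    intro j
    rw [coeff_C_mul]
    cases j with
    | zero => simp [mul_coeff_zero]
    | succ n =>
      rw [coeff_X_mul, coeff_derivative]
      push_cast
      ring
  have hcoeff : ∀ j : ℕ, Y.coeff j = ((1 + t * j) / (1 + t * d)) * Q.coeff j := by
    intro j
    show (C (1 / (1 + t * d)) * (Q + C t * (X * derivative Q))).coeff j = _
    rw [coeff_C_mul, coeff_add, hderiv_coeff]
    field_simp
  -- degree facts about Q
  have hQm : Q.Monic := by
    rw [hQ]; exact monic_prod_of_monic _ _ fun i _ => monic_X_sub_C _
  have hQd : Q.natDegree = d := by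
    rw [hQ, natDegree_prod _ _ fun i _ => X_sub_C_ne_zero _]
    simp [natDegree_X_sub_C]
  -- Y is monic of degree d
  have hQtop : Q.coeff d = 1 := by
    rw [← hQd]; exact hQm.coeff_natDegree
  have hYtop : Y.coeff d = 1 := by
    rw [hcoeff d, hQtop, mul_one, div_self (ne_of_gt htd)]
  have hYhigh : ∀ j : ℕ, d < j → Y.coeff j = 0 := by
    intro j hj
    rw [hcoeff j, coeff_eq_zero_of_natDegree_lt (by rw [hQd]; exact hj), mul_zero]
  have hYd : Y.natDegree = d :=
    le_antisymm (natDegree_le_iff_coeff_eq_zero.mpr hYhigh)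
      (le_natDegree_of_ne_zero (by rw [hYtop]; exact one_ne_zero))
  have hYm : Y.Monic := by
    rw [Monic, leadingCoeff, hYd, hYtop]
  -- reduction: it suffices to find roots
  have key : ∀ s : Fin d → ℝ, Function.Injective s → (∀ i, Y.eval (s i) = 0) →
      Y = ∏ i : Fin d, (X - C (s i)) := by
    intro s hs hse
    set P : ℝ[X] := ∏ i : Fin d, (X - C (s i)) with hP
    have hPm : P.Monic := monic_prod_of_monic _ _ fun i _ => monic_X_sub_C _
    have hPd : P.natDegree = d := by
      rw [hP, natDegree_prod _ _ fun i _ => X_sub_C_ne_zero _]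
      simp [natDegree_X_sub_C]
    by_contra hne
    have hsub : Y - P ≠ 0 := sub_ne_zero.mpr hne
    have hdeg : (Y - P).natDegree < d := by
      have h1 : (Y - P).degree < Y.degree :=
        degree_sub_lt (by rw [degree_eq_natDegree hYm.ne_zero,
            degree_eq_natDegree hPm.ne_zero, hYd, hPd])
          hYm.ne_zero (by rw [hYm.leadingCoeff, hPm.leadingCoeff])
      have h2 : (Y - P).degree < (d : ℕ) := by
        rwa [degree_eq_natDegree hYm.ne_zero, hYd] at h1
      exact natDegree_lt_iff_degree_lt hsub |>.mpr h2
    refine hsub (eq_zero_of_natDegree_lt_card_of_eval_eq_zero _ hs (fun i => ?_) ?_)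
    · rw [eval_sub, hse i, hP, eval_prod]
      rw [Finset.prod_eq_zero (Finset.mem_univ i) (by simp)]
      ring
    · simpa using hdeg
  refine ⟨?_, hcoeff⟩
  rcases eq_or_lt_of_le ht with h0 | hpos
  · -- t = 0 : Y = Q
    have hYQ : Y = Q := by
      show C (1 / (1 + t * d)) * (Q + C t * (X * derivative Q)) = Q
      rw [← h0]
      simp
    exact ⟨r, hr, hr0, by rw [hYQ, hQ]⟩
  -- main case : 0 < t
  set S : Finset ℝ := Finset.univ.image r with hS
  have hScard : S.card = d := by
    rw [hS, Finset.card_image_of_injective _ hr, Finset.card_univ, Fintype.card_fin]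
  set w : Fin d → ℝ := fun i => S.orderEmbOfFin hScard i with hw
  have hwmono : StrictMono w := (S.orderEmbOfFin hScard).strictMono
  have hwmem : ∀ i, w i ∈ S := fun i => Finset.orderEmbOfFin_mem S hScard i
  have hw0 : ∀ i, w i ≠ 0 := by
    intro i
    obtain ⟨j, -, hj⟩ := Finset.mem_image.1 (hwmem i)
    rw [← hj]; exact hr0 j
  have himg : Finset.univ.image w = S := by
    apply Finset.coe_injective
    rw [Finset.coe_image, Finset.coe_univ, Set.image_univ]
    exact Finset.range_orderEmbOfFin S hScard
  have hQw : Q = ∏ i : Fin d, (X - C (w i)) := by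
    have h1 := Finset.prod_image (s := (Finset.univ : Finset (Fin d))) (g := r)
      (f := fun a : ℝ => X - C a) (fun x _ y _ h => hr h)
    have h2 := Finset.prod_image (s := (Finset.univ : Finset (Fin d))) (g := w)
      (f := fun a : ℝ => X - C a) (fun x _ y _ h => hwmono.injective h)
    rw [hQ, ← h1, ← hS, ← himg, h2]
  have hQeval : ∀ x : ℝ, Q.eval x = ∏ i : Fin d, (x - w i) := by
    intro x; rw [hQw]; simp [eval_prod]
  have hQ'eval : ∀ k : Fin d,
      (derivative Q).eval (w k) = ∏ i ∈ Finset.univ.erase k, (w k - w i) := by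
    intro k
    rw [hQw, derivative_finset_prod, eval_finset_sum]
    rw [Finset.sum_eq_single k]
    · simp [eval_prod]
    · intro b _ hbk
      have : k ∈ (Finset.univ : Finset (Fin d)).erase b := by
        simp [Finset.mem_erase, Ne.symm hbk]
      rw [eval_mul, eval_prod, Finset.prod_eq_zero this (by simp)]
      ring
    · simp
  set R : ℝ[X] := Q + C t * (X * derivative Q) with hR
  have hReval : ∀ x : ℝ, R.eval x = Q.eval x + t * (x * (derivative Q).eval x) := by
    intro x; rw [hR]; simp
  -- number of negative roots
  set F : Finset (Fin d) := Finset.univ.filter (fun i => w i < 0) with hF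
  set n : ℕ := F.card with hn
  have hnd : n ≤ d := by
    rw [hn]
    calc F.card ≤ Finset.univ.card := Finset.card_filter_le _ _
    _ = d := by simp
  have hmem1 : ∀ i : Fin d, w i < 0 → (i : ℕ) < n := by
    intro i hi
    have hsub : Finset.Iic i ⊆ F := by
      intro j hj
      rw [hF, Finset.mem_filter]
      exact ⟨Finset.mem_univ j, lt_of_le_of_lt (hwmono.monotone (Finset.mem_Iic.1 hj)) hi⟩
    have := Finset.card_le_card hsub
    rw [Fin.card_Iic] at this
    omega
  have hmem2 : ∀ i : Fin d, 0 < w i → n ≤ (i : ℕ) := by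
    intro i hi
    have hsub : F ⊆ Finset.Iio i := by
      intro j hj
      rw [hF, Finset.mem_filter] at hj
      rw [Finset.mem_Iio, ← hwmono.lt_iff_lt]
      linarith [hj.2]
    have := Finset.card_le_card hsub
    rw [Fin.card_Iio] at this
    omega
  have hneg : ∀ i : Fin d, (i : ℕ) < n → w i < 0 := by
    intro i hi
    rcases (hw0 i).lt_or_gt with h | h
    · exact h
    · exact absurd (hmem2 i h) (by omega)
  have hposW : ∀ i : Fin d, n ≤ (i : ℕ) → 0 < w i := by
    intro i hi
    rcases (hw0 i).lt_or_gt with h | h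
    · exact absurd (hmem1 i h) (by omega)
    · exact h
  -- the interleaved points
  set q : Fin (d + 1) → ℝ := fun j =>
    if h : (j : ℕ) < n then w ⟨j, lt_of_lt_of_le h hnd⟩
    else if h' : (j : ℕ) = n then 0
    else w ⟨(j : ℕ) - 1, by have := j.isLt; omega⟩ with hq
  have hqmono : StrictMono q := by
    rw [Fin.strictMono_iff_lt_succ]
    intro k
    have hk : (k : ℕ) < d := k.isLt
    simp only [hq, Fin.coe_castSucc, Fin.val_succ]
    by_cases h1 : (k : ℕ) + 1 < n
    · rw [dif_pos (by omega : (k:ℕ) < n), dif_pos h1]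
      exact hwmono (by simp [Fin.lt_def])
    · by_cases h2 : (k : ℕ) + 1 = n
      · rw [dif_pos (by omega : (k:ℕ) < n), dif_neg h1, dif_pos h2]
        exact hneg _ (by simp; omega)
      · rw [dif_neg h1, dif_neg h2]
        by_cases h3 : (k : ℕ) < n
        · omega
        · by_cases h4 : (k : ℕ) = n
          · rw [dif_neg h3, dif_pos h4]
            exact hposW _ (by simp; omega)
          · rw [dif_neg h3, dif_neg h4]
            exact hwmono (by simp [Fin.lt_def]; omega)
  -- sign of the derivative at the roots
  have hQ'sign : ∀ k : Fin d,
      0 < (-1:ℝ) ^ (d - 1 - (k : ℕ)) * (derivative Q).eval (w k) := by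
    intro k
    rw [hQ'eval k]
    have hprod := sign_prod_aux (Finset.univ.erase k) (fun i => w k - w i)
      (fun i hi => sub_ne_zero.mpr fun h =>
        (Finset.mem_erase.1 hi).1 (hwmono.injective h.symm))
    have hfil : ((Finset.univ.erase k).filter (fun i => w k - w i < 0)) = Finset.Ioi k := by
      ext i
      simp only [Finset.mem_filter, Finset.mem_erase, Finset.mem_univ, true_and,
        Finset.mem_Ioi, sub_neg, hwmono.lt_iff_lt, and_true]
      constructor
      · rintro ⟨-, h⟩; exact h
      · intro h; exact ⟨ne_of_gt h, h⟩
    rw [hfil, Fin.card_Ioi] at hprod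
    exact hprod
  -- sign of Q at 0
  have hQ0sign : 0 < (-1:ℝ) ^ (d - n) * Q.eval 0 := by
    rw [hQeval 0]
    have hprod := sign_prod_aux Finset.univ (fun i : Fin d => 0 - w i)
      (fun i _ => sub_ne_zero.mpr (Ne.symm (hw0 i)))
    have hfil : (Finset.univ.filter (fun i : Fin d => 0 - w i < 0)).card = d - n := by
      have heq : Finset.univ.filter (fun i : Fin d => 0 - w i < 0) = Finset.univ \ F := by
        ext i
        rw [Finset.mem_filter, Finset.mem_sdiff, hF, Finset.mem_filter]
        constructor
        · rintro ⟨h1, h2⟩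
          exact ⟨h1, fun h3 => by linarith [h3.2]⟩
        · rintro ⟨h1, h2⟩
          refine ⟨h1, ?_⟩
          have : ¬ w i < 0 := fun hc => h2 ⟨h1, hc⟩
          have := lt_of_le_of_ne (not_lt.1 this) (Ne.symm (hw0 i))
          linarith
      rw [heq, Finset.card_sdiff_of_subset (Finset.subset_univ F), Finset.card_univ,
        Fintype.card_fin, ← hn]
    rw [hfil] at hprod
    exact hprod
  -- sign of R at the interleaved points
  have hsign : ∀ j : Fin (d + 1), 0 < (-1:ℝ) ^ (d - (j : ℕ)) * R.eval (q j) := by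
    intro j
    rcases lt_trichotomy ((j : ℕ)) n with h | h | h
    · -- q j is a negative root of Q
      have hjd : (j : ℕ) < d := lt_of_lt_of_le h hnd
      set k : Fin d := ⟨(j : ℕ), hjd⟩ with hk
      have hkj : (k : ℕ) = (j : ℕ) := rfl
      have hqj : q j = w k := by simp only [hq]; rw [dif_pos h]
      have hwk : w k < 0 := hneg k (by omega)
      have hQk : Q.eval (w k) = 0 := by
        rw [hQeval]
        exact Finset.prod_eq_zero (Finset.mem_univ k) (by ring)
      have hD := hQ'sign k
      rw [hqj, hReval, hQk, zero_add]
      have he : d - (j : ℕ) = (d - 1 - (k : ℕ)) + 1 := by omega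
      rw [he, pow_succ]
      nlinarith [mul_pos (mul_pos hpos (neg_pos.mpr hwk)) hD]
    · -- q j = 0
      have hqj : q j = 0 := by
        simp only [hq]; rw [dif_neg (by omega), dif_pos h]
      rw [hqj, hReval, zero_mul, mul_zero, add_zero, h]
      exact hQ0sign
    · -- q j is a positive root of Q
      have hjd : (j : ℕ) - 1 < d := by have := j.isLt; omega
      set k : Fin d := ⟨(j : ℕ) - 1, hjd⟩ with hk
      have hkj : (k : ℕ) = (j : ℕ) - 1 := rfl
      have hqj : q j = w k := by
        simp only [hq]; rw [dif_neg (by omega), dif_neg (by omega)]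
      have hwk : 0 < w k := hposW k (by omega)
      have hQk : Q.eval (w k) = 0 := by
        rw [hQeval]
        exact Finset.prod_eq_zero (Finset.mem_univ k) (by ring)
      have hD := hQ'sign k
      rw [hqj, hReval, hQk, zero_add]
      have he : d - (j : ℕ) = d - 1 - (k : ℕ) := by omega
      rw [he]
      nlinarith [mul_pos (mul_pos hpos hwk) hD]
  -- roots of R via the intermediate value theorem
  have hex : ∀ k : Fin d, ∃ x, x ∈ Set.Ioo (q k.castSucc) (q k.succ) ∧ R.eval x = 0 := by
    intro k
    have hA := hsign k.castSucc
    have hB := hsign k.succ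
    simp only [Fin.coe_castSucc, Fin.val_succ] at hA hB
    set m : ℕ := d - ((k : ℕ) + 1) with hm
    have hkd : (k : ℕ) < d := k.isLt
    have hdm : d - (k : ℕ) = m + 1 := by omega
    rw [hdm, pow_succ] at hA
    have hle : q k.castSucc ≤ q k.succ :=
      le_of_lt (hqmono (by simp [Fin.lt_def]))
    have hcont : ContinuousOn (fun x => R.eval x) (Set.Icc (q k.castSucc) (q k.succ)) :=
      (Polynomial.continuous R).continuousOn
    rcases lt_trichotomy (R.eval (q k.castSucc)) 0 with hA' | hA' | hA'
    · have hB' : 0 < R.eval (q k.succ) := by nlinarith [pow_pos (by norm_num : (0:ℝ) < 1) m]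
      have h0 : (0:ℝ) ∈ Set.Ioo (R.eval (q k.castSucc)) (R.eval (q k.succ)) := ⟨hA', hB'⟩
      obtain ⟨x, hx, hx0⟩ := intermediate_value_Ioo hle hcont h0
      exact ⟨x, hx, hx0⟩
    · exfalso; rw [hA'] at hA; simp at hA
    · have hB' : R.eval (q k.succ) < 0 := by nlinarith [pow_pos (by norm_num : (0:ℝ) < 1) m]
      have h0 : (0:ℝ) ∈ Set.Ioo (R.eval (q k.succ)) (R.eval (q k.castSucc)) := ⟨hB', hA'⟩
      obtain ⟨x, hx, hx0⟩ := intermediate_value_Ioo' hle hcont h0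
      exact ⟨x, hx, hx0⟩
  choose s hsIoo hs0 using hex
  have hsmono : StrictMono s := by
    intro k l hkl
    have h1 : s k < q k.succ := (hsIoo k).2
    have h2 : q l.castSucc < s l := (hsIoo l).1
    have h3 : q k.succ ≤ q l.castSucc := by
      apply hqmono.monotone
      simp only [Fin.le_def, Fin.val_succ, Fin.coe_castSucc]
      exact hkl
    linarith
  have hszero : ∀ k, s k ≠ 0 := by
    intro k hk
    have h1 := (hsIoo k).1
    have h2 := (hsIoo k).2
    rw [hk] at h1 h2
    have hq0 : q ⟨n, Nat.lt_succ_of_le hnd⟩ = 0 := by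
      simp only [hq]; rw [dif_neg (by simp), dif_pos (by simp)]
    rw [← hq0] at h1 h2
    have ha := hqmono.lt_iff_lt.1 h1
    have hb := hqmono.lt_iff_lt.1 h2
    simp only [Fin.lt_def, Fin.coe_castSucc, Fin.val_succ] at ha hb
    omega
  have hYR : Y = C (1 / (1 + t * ↑d)) * R := by
    show C (1 / (1 + t * ↑d)) * (Q + C t * (X * derivative Q)) = _
    rw [hR]
  have hYe : ∀ k, Y.eval (s k) = 0 := by
    intro k
    rw [hYR, eval_mul, hs0 k, mul_zero]
  exact ⟨s, hsmono.injective, hszero, key s hsmono.injective hYe⟩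
end

section
/- Let d be an even positive integer and let Q = x^d + a_{d−1}x^{d−1} + ⋯ + a_1x + a_0 be a monic real polynomial with a_0 < 0, with a_j > 0 for every odd j with 1 ≤ j ≤ d−1, and having exactly two real roots, both simple, namely −η < 0 < ξ. Then ξ < η. -/
open Polynomial

lemma Qpoly_eval (d : ℕ) (a : Fin d → ℝ) (x : ℝ) :
    (Qpoly d a).eval x = x ^ d + ∑ j : Fin d, a j * x ^ (j : ℕ) := by
  simp [Qpoly, eval_finset_sum]

theorem stmt8 (d : ℕ) (hd : 0 < d) (hdeven : Even d) (a : Fin d → ℝ)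
    (ha0 : a ⟨0, hd⟩ < 0)
    (hodd : ∀ j : Fin d, Odd (j : ℕ) → 0 < a j)
    (ξ η : ℝ) (hξ : 0 < ξ) (hη : 0 < η)
    (hroot1 : (Qpoly d a).eval (-η) = 0) (hroot2 : (Qpoly d a).eval ξ = 0)
    (hsimple1 : (Polynomial.derivative (Qpoly d a)).eval (-η) ≠ 0)
    (hsimple2 : (Polynomial.derivative (Qpoly d a)).eval ξ ≠ 0)
    (honly : ∀ x : ℝ, (Qpoly d a).eval x = 0 → x = -η ∨ x = ξ) :
    ξ < η := by
  have hd2 : 2 ≤ d := by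
    rcases hdeven with ⟨k, rfl⟩; omega
  -- Q(η) > 0
  have hdiff : (Qpoly d a).eval η - (Qpoly d a).eval (-η)
      = ∑ j : Fin d, a j * (η ^ (j : ℕ) - (-η) ^ (j : ℕ)) := by
    rw [Qpoly_eval, Qpoly_eval, hdeven.neg_pow]
    simp only [mul_sub, Finset.sum_sub_distrib]
    ring
  have hpos : 0 < ∑ j : Fin d, a j * (η ^ (j : ℕ) - (-η) ^ (j : ℕ)) := by
    apply Finset.sum_pos'
    · intro j _
      rcases Nat.even_or_odd (j : ℕ) with he | ho
      · rw [he.neg_pow]; simp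
      · rw [ho.neg_pow]
        have := hodd j ho
        have : 0 < η ^ (j : ℕ) := pow_pos hη _
        nlinarith [hodd j ho]
    refine ⟨⟨1, by omega⟩, Finset.mem_univ _, ?_⟩
    · have ho : Odd ((⟨1, by omega⟩ : Fin d) : ℕ) := ⟨0, rfl⟩
      rw [ho.neg_pow]
      have := hodd _ ho
      have hp : 0 < η ^ ((⟨1, by omega⟩ : Fin d) : ℕ) := pow_pos hη _
      nlinarith
  have hQη : 0 < (Qpoly d a).eval η := by rw [hroot1] at hdiff; linarith
  -- Q(0) < 0
  have hQ0 : (Qpoly d a).eval 0 < 0 := by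
    rw [Qpoly_eval]
    have hz : ∀ j : Fin d, a j * (0:ℝ) ^ (j : ℕ) = if j = ⟨0, hd⟩ then a ⟨0, hd⟩ else 0 := by
      intro j
      by_cases h : j = ⟨0, hd⟩
      · subst h; simp
      · have : (j : ℕ) ≠ 0 := fun hj => h (Fin.ext hj)
        simp [h, zero_pow this]
    rw [Finset.sum_congr rfl (fun j _ => hz j), Finset.sum_ite_eq' Finset.univ,
      zero_pow hd.ne']
    simpa using ha0
  -- IVT on [0, η]
  have hcont : ContinuousOn (fun x => (Qpoly d a).eval x) (Set.Icc 0 η) :=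
    (Qpoly d a).continuous_aeval.continuousOn
  have hmem : (0:ℝ) ∈ Set.Ioo ((Qpoly d a).eval 0) ((Qpoly d a).eval η) := ⟨hQ0, hQη⟩
  obtain ⟨r, hr, hr0⟩ := intermediate_value_Ioo hη.le hcont hmem
  rcases honly r hr0 with h | h
  · exfalso; have := hr.1; rw [h] at this; linarith
  · rw [← h]; exact hr.2
end

section
/- Let d be an even positive integer and let Q = x^d + a_{d−1}x^{d−1} + ⋯ + a_1x + a_0 be a monic real polynomial with a_0 < 0, with a_j < 0 for every odd j with 1 ≤ j ≤ d−1, and having exactly two real roots, both simple, namely −η < 0 < ξ. Then ξ > η. -/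
open Polynomial

theorem stmt9 (d : ℕ) (hd : 0 < d) (hdeven : Even d) (a : Fin d → ℝ)
    (ha0 : a ⟨0, hd⟩ < 0)
    (hodd : ∀ j : Fin d, Odd (j : ℕ) → a j < 0)
    (ξ η : ℝ) (hξ : 0 < ξ) (hη : 0 < η)
    (hroot1 : (Qpoly d a).eval (-η) = 0) (hroot2 : (Qpoly d a).eval ξ = 0)
    (hsimple1 : (Polynomial.derivative (Qpoly d a)).eval (-η) ≠ 0)
    (hsimple2 : (Polynomial.derivative (Qpoly d a)).eval ξ ≠ 0)
    (honly : ∀ x : ℝ, (Qpoly d a).eval x = 0 → x = -η ∨ x = ξ) :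
    η < ξ := by
  set Q := Qpoly d a with hQ
  have heval : ∀ x : ℝ, Q.eval x = x ^ d + ∑ j : Fin d, a j * x ^ (j : ℕ) := by
    intro x
    simp [hQ, Qpoly, eval_finset_sum]
  have hd2 : 2 ≤ d := by
    rcases hdeven with ⟨k, hk⟩; omega
  -- Step 1 : Q(η) < 0
  have hQη : Q.eval η < 0 := by
    have h1 : Q.eval η = Q.eval η - Q.eval (-η) := by rw [hroot1]; ring
    have h2 : Q.eval η - Q.eval (-η)
        = ∑ j : Fin d, a j * (η ^ (j : ℕ) - (-η) ^ (j : ℕ)) := by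
      rw [heval, heval, Even.neg_pow hdeven]
      simp only [mul_sub]
      rw [Finset.sum_sub_distrib]
      ring
    rw [h1, h2]
    have key : ∑ j : Fin d, a j * (η ^ (j : ℕ) - (-η) ^ (j : ℕ))
        < ∑ _j : Fin d, (0 : ℝ) := by
      apply Finset.sum_lt_sum
      · intro j _
        rcases Nat.even_or_odd (j : ℕ) with he | ho
        · rw [Even.neg_pow he]; simp
        · rw [Odd.neg_pow ho]
          have : a j < 0 := hodd j ho
          nlinarith [pow_pos hη (j : ℕ)]
      · refine ⟨⟨1, by omega⟩, Finset.mem_univ _, ?_⟩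
        have ho : Odd ((⟨1, by omega⟩ : Fin d) : ℕ) := by simp
        have ha1 : a ⟨1, by omega⟩ < 0 := hodd _ ho
        rw [Odd.neg_pow ho]
        simp only [pow_one]
        nlinarith
    simpa using key
  -- Step 2 : Q(x) > 0 for some x ≥ η
  have hdeg : Q.degree = d := by
    rw [hQ, Qpoly]
    have hsum : (∑ j : Fin d, C (a j) * X ^ (j : ℕ) : ℝ[X]).degree < (d : ℕ) := by
      apply lt_of_le_of_lt (Polynomial.degree_sum_le _ _)
      rw [Finset.sup_lt_iff]
      · intro j _
        apply lt_of_le_of_lt (degree_C_mul_X_pow_le _ _)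
        simpa using (Nat.cast_lt (α := WithBot ℕ)).2 j.2
      · exact_mod_cast WithBot.bot_lt_coe d
    rw [degree_add_eq_left_of_degree_lt]
    · exact degree_X_pow d
    · rwa [degree_X_pow]
  have hlead : Q.leadingCoeff = 1 := by
    rw [hQ, Qpoly]
    rw [add_comm, Polynomial.leadingCoeff_add_of_degree_lt, leadingCoeff_X_pow]
    rw [degree_X_pow]
    apply lt_of_le_of_lt (Polynomial.degree_sum_le _ _)
    rw [Finset.sup_lt_iff]
    · intro j _
      apply lt_of_le_of_lt (degree_C_mul_X_pow_le _ _)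
      exact_mod_cast (Nat.cast_lt (α := WithBot ℕ)).2 j.2
    · exact_mod_cast WithBot.bot_lt_coe d
  have htend : Filter.Tendsto (fun x => Q.eval x) Filter.atTop Filter.atTop := by
    apply Polynomial.tendsto_atTop_of_leadingCoeff_nonneg
    · rw [hdeg]; exact_mod_cast hd
    · rw [hlead]; norm_num
  obtain ⟨N, hN⟩ := ((htend.eventually_gt_atTop 0).and
      (Filter.eventually_ge_atTop η)).exists
  obtain ⟨hN1, hN2⟩ := hN
  -- Step 3 : IVT
  have hcont : ContinuousOn (fun x => Q.eval x) (Set.Icc η N) :=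
    (Polynomial.continuous Q).continuousOn
  have h0 : (0 : ℝ) ∈ Set.Icc (Q.eval η) (Q.eval N) := ⟨le_of_lt hQη, le_of_lt hN1⟩
  obtain ⟨x, hxmem, hxeq0⟩ := intermediate_value_Icc hN2 hcont h0
  have hxeq : Q.eval x = 0 := hxeq0
  rcases honly x hxeq with h | h
  · exfalso; have := hxmem.1; rw [h] at this; linarith
  · have hxη : x ≠ η := by
      intro he; rw [he] at hxeq; rw [hxeq] at hQη; exact lt_irrefl _ hQη
    have := hxmem.1
    rw [h] at this hxη
    exact lt_of_le_of_ne this (Ne.symm hxη)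
end

section
/- Let d be an odd positive integer and let ε : {0,…,d−1} → {−1,1} be a sign pattern. Then the set of coefficient vectors (a_0,…,a_{d−1}) ∈ ℝ^d such that the monic polynomial Q = x^d + a_{d−1}x^{d−1} + ⋯ + a_0 has sign pattern ε and has exactly one real root, which is simple and equal to 1, is convex. -/
open Polynomial Filter

lemma Qpoly_monic (d : ℕ) (a : Fin d → ℝ) : (Qpoly d a).Monic :=
  monic_X_pow_add (degree_sum_fin_lt a)

lemma Qpoly_degree (d : ℕ) (a : Fin d → ℝ) : (Qpoly d a).degree = d := by
  unfold Qpoly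
  rw [degree_add_eq_left_of_degree_lt (by simpa using degree_sum_fin_lt a), degree_X_pow]

lemma Qpoly_combo (d : ℕ) (a b : Fin d → ℝ) (t s : ℝ) (hts : t + s = 1) :
    Qpoly d (t • a + s • b) = C t * Qpoly d a + C s * Qpoly d b := by
  unfold Qpoly
  simp only [Pi.add_apply, Pi.smul_apply, smul_eq_mul, C_add, C_mul, mul_add,
    Finset.mul_sum, add_mul]
  rw [Finset.sum_add_distrib]
  simp only [mul_assoc]
  have h2 : (C t + C s : Polynomial ℝ) = 1 := by rw [← C_add, hts, C_1]
  linear_combination (-(X ^ d) : Polynomial ℝ) * h2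

lemma Qpoly_sign (d : ℕ) (hd : 0 < d) (a : Fin d → ℝ)
    (h0 : (Qpoly d a).eval 1 = 0)
    (h1 : (Polynomial.derivative (Qpoly d a)).eval 1 ≠ 0)
    (h2 : ∀ x : ℝ, (Qpoly d a).eval x = 0 → x = 1) :
    (∀ x : ℝ, 1 < x → 0 < (Qpoly d a).eval x) ∧
    (∀ x : ℝ, x < 1 → (Qpoly d a).eval x < 0) ∧
    0 < (Polynomial.derivative (Qpoly d a)).eval 1 := by
  set Q := Qpoly d a with hQ
  have hcont : Continuous fun x : ℝ => Q.eval x := Q.continuous_aeval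
  have htop : Tendsto (fun x : ℝ => Q.eval x) atTop atTop :=
    Q.tendsto_atTop_of_leadingCoeff_nonneg
      (by rw [hQ, Qpoly_degree]; exact_mod_cast hd)
      (by rw [(Qpoly_monic d a).leadingCoeff]; norm_num)
  have hpos : ∀ x : ℝ, 1 < x → 0 < Q.eval x := by
    intro x hx
    rcases lt_trichotomy (Q.eval x) 0 with h | h | h
    · exfalso
      obtain ⟨y, hy1, hy2⟩ := ((htop.eventually_gt_atTop 0).and (eventually_ge_atTop x)).exists
      obtain ⟨z, hz, hz0⟩ := intermediate_value_Icc hy2 hcont.continuousOn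
        (Set.mem_Icc.mpr ⟨h.le, hy1.le⟩)
      have := h2 z hz0
      have := hz.1
      linarith
    · exact absurd (h2 x h) (by linarith)
    · exact h
  have hneg : ∀ x : ℝ, x < 1 → Q.eval x < 0 := by
    by_contra hC
    push_neg at hC
    obtain ⟨x, hx, hxe⟩ := hC
    have hxpos : 0 < Q.eval x := by
      rcases hxe.eq_or_lt with h | h
      · exact absurd (h2 x h.symm) (by linarith)
      · exact h
    have hglobal : ∀ y : ℝ, 0 ≤ Q.eval y := by
      intro y
      rcases lt_trichotomy y 1 with hy | hy | hy
      · by_contra hyneg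
        push_neg at hyneg
        rcases lt_trichotomy y x with hxy | hxy | hxy
        · obtain ⟨z, hz, hz0⟩ := intermediate_value_Icc hxy.le hcont.continuousOn
            (Set.mem_Icc.mpr ⟨hyneg.le, hxpos.le⟩)
          have := h2 z hz0
          have := hz.2
          linarith
        · rw [hxy] at hyneg; linarith
        · obtain ⟨z, hz, hz0⟩ := intermediate_value_Icc' hxy.le hcont.continuousOn
            (Set.mem_Icc.mpr ⟨hyneg.le, hxpos.le⟩)
          have := h2 z hz0
          have := hz.2
          linarith
      · rw [hy, h0]
      · exact (hpos y hy).le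
    have hmin : IsLocalMin (fun y : ℝ => Q.eval y) 1 :=
      Filter.Eventually.of_forall fun y => by simp only [h0]; exact hglobal y
    exact h1 (hmin.hasDerivAt_eq_zero (Q.hasDerivAt 1))
  refine ⟨hpos, hneg, ?_⟩
  have hda : HasDerivAt (fun x : ℝ => Q.eval x) ((derivative Q).eval 1) 1 := Q.hasDerivAt 1
  have hsl := hasDerivAt_iff_tendsto_slope.mp hda
  have hsub : Set.Ioi (1:ℝ) ⊆ {(1:ℝ)}ᶜ := fun y hy => ne_of_gt hy
  have hsl' := hsl.mono_left (nhdsWithin_mono 1 hsub)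
  have hDnn : 0 ≤ (derivative Q).eval 1 := by
    refine ge_of_tendsto hsl' ?_
    filter_upwards [self_mem_nhdsWithin] with y hy
    have hy1 : (1:ℝ) < y := hy
    rw [slope_def_field]
    have := hpos y hy1
    have : 0 ≤ (Q.eval y - Q.eval 1) / (y - 1) := by
      apply div_nonneg <;> [skip; linarith]
      rw [h0]; linarith
    simpa using this
  exact hDnn.lt_of_ne (Ne.symm h1)

theorem stmt16 (d : ℕ) (hd : Odd d)
    (ε : Fin d → ℝ) (hε : ∀ j, ε j = 1 ∨ ε j = -1) :
    Convex ℝ {a : Fin d → ℝ | (∀ j : Fin d, 0 < ε j * a j) ∧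
      (Qpoly d a).eval 1 = 0 ∧
      (Polynomial.derivative (Qpoly d a)).eval 1 ≠ 0 ∧
      ∀ x : ℝ, (Qpoly d a).eval x = 0 → x = 1} := by
  rintro a ⟨hsa, ha0, ha1, ha2⟩ b ⟨hsb, hb0, hb1, hb2⟩ t s ht hs hts
  have hd0 : 0 < d := hd.pos
  obtain ⟨hpa, hna, hda⟩ := Qpoly_sign d hd0 a ha0 ha1 ha2
  obtain ⟨hpb, hnb, hdb⟩ := Qpoly_sign d hd0 b hb0 hb1 hb2
  have hcombo := Qpoly_combo d a b t s hts
  have heval : ∀ x : ℝ, (Qpoly d (t • a + s • b)).eval x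
      = t * (Qpoly d a).eval x + s * (Qpoly d b).eval x := by
    intro x; rw [hcombo]; simp
  have combo_pos : ∀ p q : ℝ, 0 < p → 0 < q → 0 < t * p + s * q := by
    intro p q hp hq
    rcases ht.eq_or_lt with h | h
    · have hs1 : s = 1 := by linarith
      rw [← h, hs1]; simpa using hq
    · have h1 : 0 < t * p := mul_pos h hp
      have h2 : 0 ≤ s * q := mul_nonneg hs hq.le
      linarith
  refine ⟨?_, ?_, ?_, ?_⟩
  · intro j
    have hkey : ε j * ((t • a + s • b) j) = t * (ε j * a j) + s * (ε j * b j) := by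
      simp only [Pi.add_apply, Pi.smul_apply, smul_eq_mul]; ring
    rw [hkey]
    exact combo_pos _ _ (hsa j) (hsb j)
  · rw [heval 1, ha0, hb0]; ring
  · have hder : (Polynomial.derivative (Qpoly d (t • a + s • b))).eval 1
        = t * (Polynomial.derivative (Qpoly d a)).eval 1
          + s * (Polynomial.derivative (Qpoly d b)).eval 1 := by
      rw [hcombo]; simp [derivative_add, derivative_C_mul]
    rw [hder]
    exact (combo_pos _ _ hda hdb).ne'
  · intro x hx
    rw [heval x] at hx
    rcases lt_trichotomy x 1 with h | h | h
    · exfalso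
      have := combo_pos _ _ (neg_pos.mpr (hna x h)) (neg_pos.mpr (hnb x h))
      nlinarith
    · exact h
    · exfalso
      have := combo_pos _ _ (hpa x h) (hpb x h)
      linarith
end

section
/- Let d ≥ 2 and let (b, c) ∈ ℝ² with b ≠ 0 and c ≠ 0. Then there exists a monic real polynomial Q = x^d + b·x^{d−1} + c·x^{d−2} + a_{d−3}x^{d−3} + ⋯ + a_0 having d distinct nonzero real roots and all coefficients a_0, …, a_{d−3}, c, b nonzero, if and only if c < (d−1)·b²/(2d). Moreover, there exists a monic hyperbolic polynomial of degree d with a_{d−1} = b and a_{d−2} = c (no conditions on the other coefficients and with roots counted with multiplicity) if and only if c ≤ (d−1)·b²/(2d). -/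
open Polynomial

section Helpers
open Finset


lemma e2_identity {ι : Type*} [DecidableEq ι] (f : ι → ℝ) (s : Finset ι) :
    2 * ∑ t ∈ s.powersetCard 2, ∏ i ∈ t, f i
      = (∑ i ∈ s, f i) ^ 2 - ∑ i ∈ s, (f i) ^ 2 := by
  induction s using Finset.induction_on with
  | empty =>
    rw [Finset.powersetCard_eq_empty.2 (by simp)]
    simp
  | @insert a s ha ih =>
    have hdisj : Disjoint (s.powersetCard 2) ((s.powersetCard 1).image (insert a)) := by
      rw [Finset.disjoint_left]
      intro t ht ht'
      have hts : t ⊆ s := (Finset.mem_powersetCard.1 ht).1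
      obtain ⟨u, _, rfl⟩ := Finset.mem_image.1 ht'
      exact ha (hts (Finset.mem_insert_self a u))
    have hinj : ∀ t ∈ s.powersetCard 1, ∀ t' ∈ s.powersetCard 1,
        insert a t = insert a t' → t = t' := by
      intro t ht t' ht' h
      have hat : a ∉ t := fun h' => ha ((Finset.mem_powersetCard.1 ht).1 h')
      have hat' : a ∉ t' := fun h' => ha ((Finset.mem_powersetCard.1 ht').1 h')
      rw [← Finset.erase_insert hat, ← Finset.erase_insert hat', h]
    rw [show (2 : ℕ) = 1 + 1 from rfl, Finset.powersetCard_succ_insert ha,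
      Finset.sum_union hdisj, Finset.sum_image hinj]
    have h2 : ∑ t ∈ s.powersetCard 1, ∏ i ∈ insert a t, f i
        = f a * ∑ i ∈ s, f i := by
      rw [Finset.mul_sum]
      rw [Finset.powersetCard_one, Finset.sum_map]
      simp only [Function.Embedding.coeFn_mk]
      refine Finset.sum_congr rfl fun i hi => ?_
      rw [Finset.prod_insert (by simp; rintro rfl; exact ha hi), Finset.prod_singleton]
    rw [h2, Finset.sum_insert ha, Finset.sum_insert ha]
    rw [show (1:ℕ)+1 = 2 from rfl]
    rw [mul_add, ih]
    ring

lemma prod_eq_multiset (d : ℕ) (r : Fin d → ℝ) :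
    (∏ i : Fin d, (X - C (r i))) =
      (((Finset.univ.val.map r)).map fun t => X - C t).prod := by
  rw [Multiset.map_map, Finset.prod_eq_multiset_prod]
  rfl

lemma card_ms (d : ℕ) (r : Fin d → ℝ) : Multiset.card (Finset.univ.val.map r) = d := by
  simp

lemma coeff_prod₁ {d : ℕ} (hd : 1 ≤ d) (r : Fin d → ℝ) :
    (∏ i : Fin d, (X - C (r i))).coeff (d - 1) = -∑ i, r i := by
  rw [prod_eq_multiset]
  rw [Multiset.prod_X_sub_C_coeff _ (by rw [card_ms]; omega)]
  rw [card_ms]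
  rw [show d - (d-1) = 1 by omega]
  rw [Finset.esymm_map_val]
  rw [Finset.powersetCard_one, Finset.sum_map]
  simp

lemma coeff_prod₂ {d : ℕ} (hd : 2 ≤ d) (r : Fin d → ℝ) :
    (∏ i : Fin d, (X - C (r i))).coeff (d - 2)
      = ((∑ i, r i) ^ 2 - ∑ i, (r i) ^ 2) / 2 := by
  rw [prod_eq_multiset]
  rw [Multiset.prod_X_sub_C_coeff _ (by rw [card_ms]; omega)]
  rw [card_ms]
  rw [show d - (d-2) = 2 by omega]
  rw [Finset.esymm_map_val]
  have := e2_identity r (Finset.univ : Finset (Fin d))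
  rw [show ((-1:ℝ))^2 = 1 by norm_num, one_mul]
  linarith



lemma qpoly_coeff {d : ℕ} (a : Fin d → ℝ) {k : ℕ} (hk : k < d) :
    (Qpoly d a).coeff k = a ⟨k, hk⟩ := by
  rw [Qpoly, Polynomial.coeff_add, Polynomial.coeff_X_pow,
    if_neg (by omega), Polynomial.finset_sum_coeff]
  rw [Finset.sum_eq_single (⟨k, hk⟩ : Fin d)]
  · simp
  · intro j _ hj
    rw [Polynomial.coeff_C_mul, Polynomial.coeff_X_pow, if_neg, mul_zero]
    intro h; apply hj; exact Fin.ext (by simp [h])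
  · simp
lemma qpoly_coeff_ge {d : ℕ} (a : Fin d → ℝ) {k : ℕ} (hk : d ≤ k) :
    (Qpoly d a).coeff k = if k = d then 1 else 0 := by
  rw [Qpoly, Polynomial.coeff_add, Polynomial.coeff_X_pow, Polynomial.finset_sum_coeff]
  rw [Finset.sum_eq_zero, add_zero]
  intro j _
  rw [Polynomial.coeff_C_mul, Polynomial.coeff_X_pow, if_neg (by omega), mul_zero]

lemma eq_qpoly_of_monic {d : ℕ} {P : Polynomial ℝ} (hm : P.Monic) (hdeg : P.natDegree = d) :
    P = Qpoly d (fun j => P.coeff (j : ℕ)) := by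
  ext n
  rcases lt_trichotomy n d with h | h | h
  · rw [qpoly_coeff _ h]
  · subst h
    rw [qpoly_coeff_ge _ le_rfl, if_pos rfl, ← hdeg]
    exact hm.coeff_natDegree
  · rw [qpoly_coeff_ge _ h.le, if_neg (by omega),
      Polynomial.coeff_eq_zero_of_natDegree_lt (by omega)]


lemma double_sum_sq {d : ℕ} (r : Fin d → ℝ) :
    ∑ i : Fin d, ∑ j : Fin d, (r i - r j) ^ 2
      = 2 * d * (∑ i, (r i) ^ 2) - 2 * (∑ i, r i) ^ 2 := by
  have h1 : ∀ i : Fin d, ∑ j : Fin d, (r i - r j) ^ 2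
      = d * r i ^ 2 - 2 * r i * (∑ j, r j) + ∑ j, r j ^ 2 := by
    intro i
    rw [Finset.sum_congr rfl (fun j _ => by ring :
      ∀ j ∈ Finset.univ, (r i - r j) ^ 2 = r i ^ 2 - 2 * r i * r j + r j ^ 2)]
    rw [Finset.sum_add_distrib, Finset.sum_sub_distrib, Finset.sum_const,
      ← Finset.mul_sum]
    simp [nsmul_eq_mul]
  rw [Finset.sum_congr rfl (fun i _ => h1 i)]
  rw [Finset.sum_add_distrib, Finset.sum_sub_distrib, Finset.sum_const, ← Finset.mul_sum]
  have h2 : ∑ x : Fin d, 2 * r x * (∑ j : Fin d, r j) = 2 * (∑ i : Fin d, r i) ^ 2 := by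
    rw [← Finset.sum_mul, ← Finset.mul_sum]; ring
  rw [h2]
  simp only [Finset.card_univ, Fintype.card_fin, nsmul_eq_mul]
  ring

lemma cs_strict {d : ℕ} (r : Fin d → ℝ) {i j : Fin d} (hij : r i ≠ r j) :
    (∑ i, r i) ^ 2 < d * ∑ i, (r i) ^ 2 := by
  have hpos : 0 < ∑ i : Fin d, ∑ j : Fin d, (r i - r j) ^ 2 := by
    have hne := sub_ne_zero.2 hij
    have hterm : (0:ℝ) < (r i - r j) ^ 2 := by positivity
    have h1 : (r i - r j) ^ 2 ≤ ∑ j' : Fin d, (r i - r j') ^ 2 :=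
      Finset.single_le_sum (f := fun j' => (r i - r j') ^ 2)
        (fun _ _ => sq_nonneg _) (Finset.mem_univ j)
    have h2 : ∑ j' : Fin d, (r i - r j') ^ 2
        ≤ ∑ i' : Fin d, ∑ j' : Fin d, (r i' - r j') ^ 2 :=
      Finset.single_le_sum (f := fun i' => ∑ j' : Fin d, (r i' - r j') ^ 2)
        (fun _ _ => Finset.sum_nonneg fun _ _ => sq_nonneg _) (Finset.mem_univ i)
    linarith
  have := double_sum_sq r
  nlinarith


lemma sum_w {d : ℕ} (hd : 2 ≤ d) :
    ∑ i : Fin d, ((i : ℝ) - ((d:ℝ) - 1) / 2) = 0 := by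
  rw [Finset.sum_sub_distrib, Finset.sum_const]
  simp only [Finset.card_univ, Fintype.card_fin, nsmul_eq_mul]
  have hnat : (∑ i ∈ Finset.range d, i) * 2 = d * (d - 1) := Finset.sum_range_id_mul_two d
  have h1 : ∑ i : Fin d, ((i : ℕ) : ℝ) = (d * (d - 1) : ℕ) / 2 := by
    rw [Fin.sum_univ_eq_sum_range (fun i => ((i:ℕ):ℝ)), ← Nat.cast_sum,
      eq_div_iff (two_ne_zero)]
    exact_mod_cast hnat
  rw [h1]
  have : ((d * (d-1) : ℕ) : ℝ) = (d:ℝ) * ((d:ℝ) - 1) := by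
    push_cast [Nat.cast_sub (by omega : 1 ≤ d)]; ring
  rw [this]; ring

/-- construction of roots with prescribed e1, e2 -/
lemma construct_roots {d : ℕ} (hd : 2 ≤ d) (b c : ℝ)
    (h : 2 * d * c ≤ ((d:ℝ) - 1) * b ^ 2) :
    ∃ r : Fin d → ℝ, (∑ i, r i) = -b ∧
      ((∑ i, r i) ^ 2 - ∑ i, (r i) ^ 2) / 2 = c ∧
      (2 * d * c < ((d:ℝ) - 1) * b ^ 2 → StrictMono r) := by
  have hd0 : (0:ℝ) < d := by positivity
  set w : Fin d → ℝ := fun i => (i : ℝ) - ((d:ℝ) - 1) / 2 with hw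
  have hsw : ∑ i, w i = 0 := sum_w hd
  set W : ℝ := ∑ i, (w i) ^ 2 with hW
  have hWpos : 0 < W := by
    have h0 : (0:ℝ) < (w ⟨0, by omega⟩) ^ 2 := by
      have : w ⟨0, by omega⟩ = -(((d:ℝ) - 1) / 2) := by simp [hw]
      rw [this]
      have h2d : (2:ℝ) ≤ (d:ℝ) := by exact_mod_cast hd
      nlinarith
    have : (w ⟨0, by omega⟩) ^ 2 ≤ W :=
      Finset.single_le_sum (f := fun i => (w i) ^ 2)
        (fun _ _ => sq_nonneg _) (Finset.mem_univ _)
    linarith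
  set K : ℝ := ((d:ℝ) - 1) * b ^ 2 / d - 2 * c with hK
  have hKnn : 0 ≤ K := by
    rw [hK, sub_nonneg, le_div_iff₀ hd0]
    nlinarith
  set s : ℝ := Real.sqrt (K / W) with hs
  have hs2 : s ^ 2 = K / W := Real.sq_sqrt (by positivity)
  refine ⟨fun i => -b / d + s * w i, ?_, ?_, ?_⟩
  · rw [Finset.sum_add_distrib, Finset.sum_const, ← Finset.mul_sum, hsw, mul_zero, add_zero]
    simp only [Finset.card_univ, Fintype.card_fin, nsmul_eq_mul]
    field_simp
  · have hsum : ∑ i : Fin d, (-b / d + s * w i) = -b := by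
      rw [Finset.sum_add_distrib, Finset.sum_const, ← Finset.mul_sum, hsw, mul_zero, add_zero]
      simp only [Finset.card_univ, Fintype.card_fin, nsmul_eq_mul]
      field_simp
    rw [hsum]
    have hsq : ∑ i : Fin d, (-b / d + s * w i) ^ 2 = b ^ 2 / d + K := by
      have expand : ∀ i : Fin d, (-b / d + s * w i) ^ 2
          = (b/d)^2 + 2 * (-b/d) * s * w i + s^2 * (w i)^2 := by intro i; ring
      rw [Finset.sum_congr rfl (fun i _ => expand i)]
      rw [Finset.sum_add_distrib, Finset.sum_add_distrib, Finset.sum_const,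
        ← Finset.mul_sum, hsw, mul_zero, ← Finset.mul_sum, ← hW]
      simp only [Finset.card_univ, Fintype.card_fin, nsmul_eq_mul]
      rw [hs2]
      field_simp
      ring
    rw [hsq, hK]
    field_simp
    ring
  · intro hlt
    have hKpos : 0 < K := by
      rw [hK, sub_pos, lt_div_iff₀ hd0]; nlinarith
    have hspos : 0 < s := Real.sqrt_pos.2 (by positivity)
    intro i j hij
    have : (i:ℝ) < (j:ℝ) := by exact_mod_cast hij
    have : w i < w j := by simp only [hw]; linarith
    nlinarith


lemma card_filter_ge (d k : ℕ) :
    (Finset.univ.filter fun i : Fin d => k ≤ (i : ℕ)).card = d - k := by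
  rw [← Nat.card_Ico k d]
  refine Finset.card_bij (fun i _ => (i : ℕ)) ?_ ?_ ?_
  · intro i hi
    simp only [Finset.mem_filter] at hi
    simp [Finset.mem_Ico, hi.2, i.isLt]
  · intro i _ j _ h; exact Fin.ext h
  · intro m hm
    simp only [Finset.mem_Ico] at hm
    exact ⟨⟨m, hm.2⟩, by simp [hm.1], rfl⟩

lemma perturb {d : ℕ} (hd : 1 ≤ d) (ρ : Fin d → ℝ) (hρ : StrictMono ρ) :
    ∃ δ : ℝ, 0 < δ ∧ ∀ E : Fin d → ℝ, (∀ j, |E j| < δ) →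
      ∃ r' : Fin d → ℝ, StrictMono r' ∧
        (∏ i : Fin d, (X - C (ρ i))) + ∑ j : Fin d, C (E j) * X ^ (j : ℕ)
          = ∏ i : Fin d, (X - C (r' i)) := by
  classical
  set P : Polynomial ℝ := ∏ i : Fin d, (X - C (ρ i)) with hP
  have hPm : P.Monic := monic_prod_of_monic _ _ fun i _ => monic_X_sub_C _
  have hPdeg : P.natDegree = d := by
    rw [hP, Polynomial.natDegree_prod _ _ fun i _ => X_sub_C_ne_zero _]
    simp
  -- the test points
  set x : ℕ → ℝ := fun k =>
    if k = 0 then ρ ⟨0, hd⟩ - 1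
    else if hk : k < d then (ρ ⟨k - 1, by omega⟩ + ρ ⟨k, hk⟩) / 2
    else ρ ⟨d - 1, by omega⟩ + 1 with hx
  have hsep : ∀ k ≤ d, ∀ i : Fin d,
      ((i : ℕ) < k → ρ i < x k) ∧ (k ≤ (i : ℕ) → x k < ρ i) := by
    intro k hk i
    rcases Nat.eq_zero_or_pos k with rfl | hk0
    · rw [show x 0 = ρ ⟨0, hd⟩ - 1 from if_pos rfl]
      refine ⟨by omega, fun _ => ?_⟩
      have h1 : ρ ⟨0, hd⟩ ≤ ρ i := hρ.monotone (by simp [Fin.le_def])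
      linarith
    · rcases eq_or_lt_of_le hk with rfl | hkd
      · rw [show x k = ρ ⟨k - 1, by omega⟩ + 1 by
          rw [hx]; simp only; rw [if_neg (by omega), dif_neg (by omega)]]
        refine ⟨fun _ => ?_, fun h => absurd i.isLt (by omega)⟩
        have h1 : ρ i ≤ ρ ⟨k - 1, by omega⟩ := hρ.monotone (by simp [Fin.le_def]; omega)
        linarith
      · rw [show x k = (ρ ⟨k - 1, by omega⟩ + ρ ⟨k, hkd⟩) / 2 by
          rw [hx]; simp only; rw [if_neg (by omega), dif_pos hkd]]
        have hlt : ρ ⟨k - 1, by omega⟩ < ρ ⟨k, hkd⟩ := hρ (by simp [Fin.lt_def]; omega)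
        constructor
        · intro h
          have h1 : ρ i ≤ ρ ⟨k - 1, by omega⟩ := hρ.monotone (by simp [Fin.le_def]; omega)
          linarith
        · intro h
          have h1 : ρ ⟨k, hkd⟩ ≤ ρ i := hρ.monotone (by simp [Fin.le_def]; omega)
          linarith
  have hxlt : ∀ k < d, x k < x (k + 1) := by
    intro k hk
    have h1 := (hsep k (le_of_lt hk) ⟨k, hk⟩).2 (by simp)
    have h2 := (hsep (k + 1) (by omega) ⟨k, hk⟩).1 (by simp)
    linarith
  have hxmono : ∀ n ≤ d, ∀ m ≤ n, x m ≤ x n := by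
    intro n
    induction n with
    | zero => intro _ m hm; interval_cases m; rfl
    | succ n ih =>
      intro hn m hm
      rcases eq_or_lt_of_le hm with rfl | hmn
      · rfl
      · exact le_trans (ih (by omega) m (by omega)) (hxlt n (by omega)).le
  -- the sign of P at the test points
  have hsign : ∀ k ≤ d, 0 < (-1 : ℝ) ^ (d - k) * P.eval (x k) := by
    intro k hk
    have heval : P.eval (x k) = ∏ i : Fin d, (x k - ρ i) := by
      simp [hP, Polynomial.eval_prod]
    rw [heval,
      ← Finset.prod_filter_mul_prod_filter_not Finset.univ (fun i : Fin d => k ≤ (i : ℕ))]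
    have hG : 0 < ∏ i ∈ Finset.univ.filter (fun i : Fin d => ¬ k ≤ (i : ℕ)), (x k - ρ i) := by
      apply Finset.prod_pos
      intro i hi
      simp only [Finset.mem_filter, not_le] at hi
      have := (hsep k hk i).1 hi.2
      linarith
    have hF : ∏ i ∈ Finset.univ.filter (fun i : Fin d => k ≤ (i : ℕ)), (x k - ρ i)
        = (-1 : ℝ) ^ (d - k) *
          ∏ i ∈ Finset.univ.filter (fun i : Fin d => k ≤ (i : ℕ)), (ρ i - x k) := by
      rw [← card_filter_ge d k, ← Finset.prod_const (-1 : ℝ), ← Finset.prod_mul_distrib]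
      exact Finset.prod_congr rfl fun i _ => by ring
    have hFpos : 0 < ∏ i ∈ Finset.univ.filter (fun i : Fin d => k ≤ (i : ℕ)), (ρ i - x k) := by
      apply Finset.prod_pos
      intro i hi
      simp only [Finset.mem_filter] at hi
      have := (hsep k hk i).2 hi.2
      linarith
    rw [hF]
    set A := ∏ i ∈ Finset.univ.filter (fun i : Fin d => k ≤ (i : ℕ)), (ρ i - x k) with hA
    set B := ∏ i ∈ Finset.univ.filter (fun i : Fin d => ¬ k ≤ (i : ℕ)), (x k - ρ i) with hB
    have key : (-1 : ℝ) ^ (d - k) * (-1 : ℝ) ^ (d - k) = 1 := by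
      rw [← pow_add]
      exact Even.neg_one_pow ⟨d - k, rfl⟩
    have hsq : (-1 : ℝ) ^ (d - k) * ((-1 : ℝ) ^ (d - k) * A * B) = A * B := by
      linear_combination A * B * key
    rw [hsq]
    exact mul_pos hFpos hG
  have hPne : ∀ k ≤ d, P.eval (x k) ≠ 0 := by
    intro k hk h0
    have := hsign k hk
    rw [h0, mul_zero] at this
    exact lt_irrefl _ this
  -- the bound B and the perturbation size δ
  set Bnd : ℕ → ℝ := fun k => ∑ j : Fin d, |x k| ^ (j : ℕ) with hBnd
  have hBnn : ∀ k, 0 ≤ Bnd k := fun k =>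
    Finset.sum_nonneg fun j _ => pow_nonneg (abs_nonneg _) _
  set δ : ℝ := Finset.univ.inf' Finset.univ_nonempty
      (fun k : Fin (d + 1) => |P.eval (x (k : ℕ))| / (Bnd (k : ℕ) + 1)) with hδ
  have hδpos : 0 < δ := by
    rw [hδ, Finset.lt_inf'_iff]
    intro k _
    have h1 : 0 < |P.eval (x (k : ℕ))| :=
      abs_pos.2 (hPne (k : ℕ) (by omega))
    have h2 : 0 < Bnd (k : ℕ) + 1 := by linarith [hBnn (k : ℕ)]
    positivity
  have hδle : ∀ k : ℕ, k ≤ d → δ * (Bnd k + 1) ≤ |P.eval (x k)| := by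
    intro k hk
    have h1 : δ ≤ |P.eval (x k)| / (Bnd k + 1) := by
      rw [hδ]
      exact Finset.inf'_le _ (Finset.mem_univ (⟨k, by omega⟩ : Fin (d + 1)))
    have h2 : 0 < Bnd k + 1 := by linarith [hBnn k]
    calc δ * (Bnd k + 1) ≤ |P.eval (x k)| / (Bnd k + 1) * (Bnd k + 1) := by
          exact mul_le_mul_of_nonneg_right h1 h2.le
      _ = |P.eval (x k)| := by field_simp
  refine ⟨δ, hδpos, fun E hE => ?_⟩
  set R : Polynomial ℝ := ∑ j : Fin d, C (E j) * X ^ (j : ℕ) with hR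
  set Q : Polynomial ℝ := P + R with hQ
  have hRdeg : R.degree < (d : ℕ) := by
    rw [hR]
    apply lt_of_le_of_lt (Polynomial.degree_sum_le _ _)
    rw [Finset.sup_lt_iff (by exact_mod_cast WithBot.bot_lt_coe d)]
    intro j _
    apply lt_of_le_of_lt (Polynomial.degree_C_mul_X_pow_le _ _)
    exact_mod_cast WithBot.coe_lt_coe.2 j.isLt
  have hPdegree : P.degree = (d : ℕ) := by
    rw [Polynomial.degree_eq_natDegree hPm.ne_zero, hPdeg]
  have hQm : Q.Monic := hPm.add_of_left (by rw [hPdegree]; exact hRdeg)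
  have hQdeg : Q.natDegree = d := by
    have : Q.degree = (d : ℕ) := by
      rw [hQ, Polynomial.degree_add_eq_left_of_degree_lt (by rw [hPdegree]; exact hRdeg)]
      exact hPdegree
    exact Polynomial.natDegree_eq_of_degree_eq_some this
  -- the perturbed polynomial has the same signs at the test points
  have hQclose : ∀ k ≤ d, |Q.eval (x k) - P.eval (x k)| < |P.eval (x k)| := by
    intro k hk
    have h0 : Q.eval (x k) - P.eval (x k) = R.eval (x k) := by rw [hQ]; ring_nf; simp
    rw [h0]
    have h1 : R.eval (x k) = ∑ j : Fin d, E j * (x k) ^ (j : ℕ) := by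
      rw [hR]; simp [Polynomial.eval_finset_sum]
    have h2 : |R.eval (x k)| ≤ ∑ j : Fin d, |E j| * |x k| ^ (j : ℕ) := by
      rw [h1]
      refine le_trans (Finset.abs_sum_le_sum_abs _ _) ?_
      exact Finset.sum_le_sum fun j _ => by rw [abs_mul, abs_pow]
    have h3 : ∑ j : Fin d, |E j| * |x k| ^ (j : ℕ) ≤ δ * Bnd k := by
      rw [hBnd, Finset.mul_sum]
      exact Finset.sum_le_sum fun j _ =>
        mul_le_mul_of_nonneg_right (hE j).le (pow_nonneg (abs_nonneg _) _)
    have h4 : δ * Bnd k < δ * (Bnd k + 1) := by nlinarith [hδpos]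
    calc |R.eval (x k)| ≤ δ * Bnd k := le_trans h2 h3
      _ < δ * (Bnd k + 1) := h4
      _ ≤ |P.eval (x k)| := hδle k hk
  have hsignQ : ∀ k ≤ d, 0 < (-1 : ℝ) ^ (d - k) * Q.eval (x k) := by
    intro k hk
    have hp := hsign k hk
    have hc := hQclose k hk
    have habs : (-1 : ℝ) ^ (d - k) * P.eval (x k) = |P.eval (x k)| := by
      have h1 : |(-1 : ℝ) ^ (d - k) * P.eval (x k)| = |P.eval (x k)| := by
        rw [abs_mul, abs_pow, abs_neg, abs_one, one_pow, one_mul]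
      rw [← h1, abs_of_pos hp]
    have h5 : (-1 : ℝ) ^ (d - k) * Q.eval (x k)
        = (-1 : ℝ) ^ (d - k) * P.eval (x k)
          + (-1 : ℝ) ^ (d - k) * (Q.eval (x k) - P.eval (x k)) := by ring
    have h6 : |(-1 : ℝ) ^ (d - k) * (Q.eval (x k) - P.eval (x k))|
        = |Q.eval (x k) - P.eval (x k)| := by
      rw [abs_mul, abs_pow, abs_neg, abs_one, one_pow, one_mul]
    have h7 := neg_abs_le ((-1 : ℝ) ^ (d - k) * (Q.eval (x k) - P.eval (x k)))
    rw [h6] at h7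
    rw [h5, habs]
    linarith
  -- opposite signs at consecutive test points, hence roots in between
  have hroot : ∀ k : Fin d, ∃ y, y ∈ Set.Ioo (x (k : ℕ)) (x ((k : ℕ) + 1)) ∧ Q.eval y = 0 := by
    intro k
    have hk1 : (k : ℕ) < d := k.isLt
    have h1 := hsignQ (k : ℕ) hk1.le
    have h2 := hsignQ ((k : ℕ) + 1) (by omega)
    have hdk : d - (k : ℕ) = (d - ((k : ℕ) + 1)) + 1 := by omega
    set u : ℝ := (-1 : ℝ) ^ (d - ((k : ℕ) + 1)) with hu
    have hu2 : u * u = 1 := by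
      rw [hu, ← pow_add]
      exact Even.neg_one_pow ⟨d - ((k : ℕ) + 1), rfl⟩
    rw [hdk, pow_succ] at h1
    -- h1 : 0 < u * (-1) * Q.eval (x k), h2 : 0 < u * Q.eval (x (k+1))
    have hopp : Q.eval (x (k : ℕ)) * Q.eval (x ((k : ℕ) + 1)) < 0 := by nlinarith
    have hxlt' : x (k : ℕ) < x ((k : ℕ) + 1) := hxlt _ hk1
    have hcont : ContinuousOn (fun y => Q.eval y) (Set.Icc (x (k : ℕ)) (x ((k : ℕ) + 1))) :=
      (Polynomial.continuous Q).continuousOn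
    rcases lt_or_gt_of_ne (fun h0 => by rw [h0] at hopp; nlinarith [sq_nonneg (Q.eval (x ((k:ℕ)+1)))] :
        Q.eval (x (k : ℕ)) ≠ Q.eval (x ((k : ℕ) + 1))) with hlt | hgt
    · -- increasing case: eval at left < eval at right; left must be negative
      have hneg : Q.eval (x (k : ℕ)) < 0 := by nlinarith
      have hpos : 0 < Q.eval (x ((k : ℕ) + 1)) := by nlinarith
      have := intermediate_value_Ioo hxlt'.le hcont (Set.mem_Ioo.2 ⟨hneg, hpos⟩)
      obtain ⟨y, hy, hQy⟩ := this
      exact ⟨y, hy, hQy⟩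
    · have hpos : 0 < Q.eval (x (k : ℕ)) := by nlinarith
      have hneg : Q.eval (x ((k : ℕ) + 1)) < 0 := by nlinarith
      have := intermediate_value_Ioo' hxlt'.le hcont (Set.mem_Ioo.2 ⟨hneg, hpos⟩)
      obtain ⟨y, hy, hQy⟩ := this
      exact ⟨y, hy, hQy⟩
  choose r' hr'mem hr'root using hroot
  have hr'mono : StrictMono r' := by
    intro i j hij
    have h1 : r' i < x ((i : ℕ) + 1) := (hr'mem i).2
    have h2 : x (j : ℕ) < r' j := (hr'mem j).1
    have h3 : x ((i : ℕ) + 1) ≤ x (j : ℕ) :=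
      hxmono (j : ℕ) j.isLt.le ((i : ℕ) + 1) (by exact_mod_cast hij)
    linarith
  refine ⟨r', hr'mono, ?_⟩
  -- Q equals the product over its d distinct roots
  have hQne : Q ≠ 0 := hQm.ne_zero
  have hms : (Finset.univ.val.map r') ≤ Q.roots := by
    rw [Multiset.le_iff_count]
    intro a
    have hnodup : (Finset.univ.val.map r').Nodup :=
      Finset.univ.nodup.map hr'mono.injective
    by_cases ha : a ∈ Finset.univ.val.map r'
    · rw [Multiset.count_eq_one_of_mem hnodup ha]
      obtain ⟨i, _, rfl⟩ := Multiset.mem_map.1 ha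
      rw [Polynomial.count_roots]
      exact (Polynomial.rootMultiplicity_pos hQne).2 (hr'root i)
    · rw [Multiset.count_eq_zero_of_notMem ha]
      exact Nat.zero_le _
  have hcard : Multiset.card (Finset.univ.val.map r') = d := by simp
  have hcard2 : Multiset.card Q.roots ≤ d := by
    rw [← hQdeg]; exact Polynomial.card_roots' Q
  have hmeq : Q.roots = Finset.univ.val.map r' :=
    (Multiset.eq_of_le_of_card_le hms (by rw [hcard]; exact hcard2)).symm
  have := Polynomial.prod_multiset_X_sub_C_of_monic_of_roots_card_eq hQm
    (by rw [hmeq, hcard, hQdeg])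
  rw [hmeq, Multiset.map_map] at this
  rw [← this, Finset.prod_eq_multiset_prod]
  rfl


lemma prod_monic {d : ℕ} (r : Fin d → ℝ) : (∏ i : Fin d, (X - C (r i))).Monic :=
  monic_prod_of_monic _ _ fun i _ => monic_X_sub_C _

lemma prod_natDegree {d : ℕ} (r : Fin d → ℝ) :
    (∏ i : Fin d, (X - C (r i))).natDegree = d := by
  rw [Polynomial.natDegree_prod _ _ fun i _ => X_sub_C_ne_zero _]
  simp

/-- from the factorization, read off the two coefficient relations -/
lemma coeff_relations {d : ℕ} (hd : 2 ≤ d) (a : Fin d → ℝ) (r : Fin d → ℝ)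
    (h : Qpoly d a = ∏ i : Fin d, (X - C (r i))) :
    a ⟨d - 1, Nat.sub_lt (lt_of_lt_of_le two_pos hd) one_pos⟩ = -∑ i, r i ∧
    a ⟨d - 2, Nat.sub_lt (lt_of_lt_of_le two_pos hd) two_pos⟩ = ((∑ i, r i) ^ 2 - ∑ i, (r i) ^ 2) / 2 := by
  constructor
  · rw [← qpoly_coeff a (show d - 1 < d by omega), h, coeff_prod₁ (by omega) r]
  · rw [← qpoly_coeff a (show d - 2 < d by omega), h, coeff_prod₂ hd r]

/-- only-if direction, weak inequality -/
lemma forward_le {d : ℕ} (hd : 2 ≤ d) (b c : ℝ) (a : Fin d → ℝ) (r : Fin d → ℝ)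
    (hab : a ⟨d - 1, Nat.sub_lt (lt_of_lt_of_le two_pos hd) one_pos⟩ = b) (hac : a ⟨d - 2, Nat.sub_lt (lt_of_lt_of_le two_pos hd) two_pos⟩ = c)
    (h : Qpoly d a = ∏ i : Fin d, (X - C (r i))) :
    c ≤ ((d : ℝ) - 1) * b ^ 2 / (2 * d) := by
  obtain ⟨h1, h2⟩ := coeff_relations hd a r h
  have hd0 : (0:ℝ) < d := by positivity
  have hcs : (∑ i, r i) ^ 2 ≤ (d:ℝ) * ∑ i, (r i) ^ 2 := by
    have := sq_sum_le_card_mul_sum_sq (s := (Finset.univ : Finset (Fin d))) (f := r)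
    simpa using this
  have hS : (∑ i, r i) = -b := by
    have h1' := h1; rw [hab] at h1'; linarith
  have hc' : c = (b ^ 2 - ∑ i, (r i) ^ 2) / 2 := by
    rw [← hac, h2, hS]; ring_nf
  rw [le_div_iff₀ (by positivity)]
  rw [hS] at hcs
  nlinarith
lemma forward_lt {d : ℕ} (hd : 2 ≤ d) (b c : ℝ) (a : Fin d → ℝ) (r : Fin d → ℝ)
    (hab : a ⟨d - 1, Nat.sub_lt (lt_of_lt_of_le two_pos hd) one_pos⟩ = b) (hac : a ⟨d - 2, Nat.sub_lt (lt_of_lt_of_le two_pos hd) two_pos⟩ = c)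
    (hinj : Function.Injective r)
    (h : Qpoly d a = ∏ i : Fin d, (X - C (r i))) :
    c < ((d : ℝ) - 1) * b ^ 2 / (2 * d) := by
  obtain ⟨h1, h2⟩ := coeff_relations hd a r h
  have hd0 : (0:ℝ) < d := by positivity
  have hne : r ⟨0, by omega⟩ ≠ r ⟨1, by omega⟩ := by
    intro he
    have := hinj he
    simp [Fin.ext_iff] at this
  have hcs : (∑ i, r i) ^ 2 < (d:ℝ) * ∑ i, (r i) ^ 2 := cs_strict r hne
  have hS : (∑ i, r i) = -b := by
    have h1' := h1; rw [hab] at h1'; linarith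
  have hc' : c = (b ^ 2 - ∑ i, (r i) ^ 2) / 2 := by
    rw [← hac, h2, hS]; ring_nf
  rw [lt_div_iff₀ (by positivity)]
  rw [hS] at hcs
  nlinarith

theorem stmt19 (d : ℕ) (hd : 2 ≤ d) (b c : ℝ) (hb : b ≠ 0) (hc : c ≠ 0) :
    -- (b, c) is in the projection of Π*_d iff c < (d-1) b² / (2d)
    ((∃ a : Fin d → ℝ, a ⟨d - 1, by omega⟩ = b ∧ a ⟨d - 2, by omega⟩ = c ∧
        (∀ j : Fin d, a j ≠ 0) ∧
        ∃ r : Fin d → ℝ, Function.Injective r ∧ (∀ i, r i ≠ 0) ∧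
          Qpoly d a = ∏ i : Fin d, (X - C (r i))) ↔
      c < ((d : ℝ) - 1) * b ^ 2 / (2 * d)) ∧
    -- (b, c) is in the projection of the hyperbolicity domain iff c ≤ (d-1) b² / (2d)
    ((∃ a : Fin d → ℝ, a ⟨d - 1, by omega⟩ = b ∧ a ⟨d - 2, by omega⟩ = c ∧
        ∃ r : Fin d → ℝ, Qpoly d a = ∏ i : Fin d, (X - C (r i))) ↔
      c ≤ ((d : ℝ) - 1) * b ^ 2 / (2 * d)) := by
  have hd0 : (0:ℝ) < d := by positivity
  constructor
  · constructor
    · rintro ⟨a, hab, hac, hanz, r, hinj, hrnz, heq⟩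
      exact forward_lt hd b c a r hab hac hinj heq
    · intro hlt
      have hlt' : 2 * d * c < ((d:ℝ) - 1) * b ^ 2 := by
        rw [lt_div_iff₀ (by positivity)] at hlt
        linarith
      obtain ⟨ρ, hsum, he2, hmono'⟩ := construct_roots hd b c hlt'.le
      have hmono : StrictMono ρ := hmono' hlt'
      set P0 : Polynomial ℝ := ∏ i : Fin d, (X - C (ρ i)) with hP0
      set a0 : Fin d → ℝ := fun j => P0.coeff (j : ℕ) with ha0
      have hP0q : P0 = Qpoly d a0 := eq_qpoly_of_monic (prod_monic ρ) (prod_natDegree ρ)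
      have ha0b : a0 ⟨d - 1, by omega⟩ = b := by
        show P0.coeff (d - 1) = b
        rw [hP0, coeff_prod₁ (by omega) ρ, hsum]; ring
      have ha0c : a0 ⟨d - 2, by omega⟩ = c := by
        show P0.coeff (d - 2) = c
        rw [hP0, coeff_prod₂ hd ρ, he2]
      obtain ⟨δ, hδpos, hpert⟩ := perturb (by omega) ρ hmono
      set E : Fin d → ℝ := fun j => if a0 j = 0 then δ / 2 else 0 with hE
      have hEsmall : ∀ j, |E j| < δ := by
        intro j
        rw [hE]; simp only
        split
        · rw [abs_of_pos (by linarith)]; linarith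
        · simpa using hδpos
      obtain ⟨r', hr'mono, heq'⟩ := hpert E hEsmall
      set a : Fin d → ℝ := fun j => a0 j + E j with ha
      have haq : Qpoly d a = ∏ i : Fin d, (X - C (r' i)) := by
        have hsplit : Qpoly d a = Qpoly d a0 + ∑ j : Fin d, C (E j) * X ^ (j : ℕ) := by
          rw [Qpoly, Qpoly]
          have hterm : ∀ j ∈ (Finset.univ : Finset (Fin d)),
              C (a j) * X ^ (j : ℕ) = C (a0 j) * X ^ (j : ℕ) + C (E j) * X ^ (j : ℕ) := by
            intro j _
            have hja : a j = a0 j + E j := rfl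
            rw [hja, map_add]; ring
          rw [Finset.sum_congr rfl hterm, Finset.sum_add_distrib]
          ring
        rw [hsplit, ← hP0q, hP0]
        exact heq'
      have hanz : ∀ j, a j ≠ 0 := by
        intro j
        rw [ha, hE]; simp only
        by_cases h0 : a0 j = 0
        · rw [if_pos h0, h0]; simpa using (by linarith : δ / 2 ≠ 0)
        · rw [if_neg h0, add_zero]; exact h0
      have hab : a ⟨d - 1, by omega⟩ = b := by
        rw [ha, hE]; simp only
        rw [if_neg (by rw [ha0b]; exact hb), ha0b, add_zero]
      have hac : a ⟨d - 2, by omega⟩ = c := by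
        rw [ha, hE]; simp only
        rw [if_neg (by rw [ha0c]; exact hc), ha0c, add_zero]
      have hrnz : ∀ i, r' i ≠ 0 := by
        intro i h0
        have hz : (Qpoly d a).coeff 0 = a ⟨0, by omega⟩ := qpoly_coeff a (by omega)
        have hz2 : (Qpoly d a).eval 0 = 0 := by
          rw [haq, Polynomial.eval_prod]
          apply Finset.prod_eq_zero (Finset.mem_univ i)
          rw [h0]; simp
        rw [Polynomial.coeff_zero_eq_eval_zero, hz2] at hz
        exact hanz _ hz.symm
      exact ⟨a, hab, hac, hanz, r', hr'mono.injective, hrnz, haq⟩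
  · constructor
    · rintro ⟨a, hab, hac, r, heq⟩
      exact forward_le hd b c a r hab hac heq
    · intro hle
      have hle' : 2 * d * c ≤ ((d:ℝ) - 1) * b ^ 2 := by
        rw [le_div_iff₀ (by positivity)] at hle
        linarith
      obtain ⟨ρ, hsum, he2, _⟩ := construct_roots hd b c hle'
      set P0 : Polynomial ℝ := ∏ i : Fin d, (X - C (ρ i)) with hP0
      set a0 : Fin d → ℝ := fun j => P0.coeff (j : ℕ) with ha0
      have hP0q : P0 = Qpoly d a0 := eq_qpoly_of_monic (prod_monic ρ) (prod_natDegree ρ)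
      refine ⟨a0, ?_, ?_, ρ, hP0q.symm⟩
      · show P0.coeff (d - 1) = b
        rw [hP0, coeff_prod₁ (by omega) ρ, hsum]; ring
      · show P0.coeff (d - 2) = c
        rw [hP0, coeff_prod₂ hd ρ, he2]

end Helpers
end
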